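/- arXiv:2505.18810 — 8 statements merged into one kernel-verified Lean document; each statement's English description precedes it below -/
import Mathlib

section
/- Let X = X₁ × X₂ with X₁ ⊆ ℝ^{n₁} open and X₂ ⊆ ℝ^{n₂} open and convex, let f ∈ C¹(X,ℝ) satisfy ∇_{x₂} f = 0 on X, let f₁ ∈ C¹(X₁,ℝ) be the specified function of f (i.e. f₁(x₁) = f(x₁,x₂) and ∇f₁(x₁) = ∇_{x₁} f(x₁,x₂) for all (x₁,x₂) ∈ X), and let D̄f₁ be a discrete gradient for f₁. Then the map D̄f : X × X → ℝ^{n₁} × ℝ^{n₂} defined by D̄f((x₁,x₂),(x₁',x₂')) = (D̄f₁(x₁,x₁'), 0) is a discrete gradient for f. -/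
open Matrix Set

noncomputable def grad {n : ℕ} (f : (Fin n → ℝ) → ℝ) (x : Fin n → ℝ) : Fin n → ℝ :=
  fun i => fderiv ℝ f x (Pi.single i 1)

noncomputable def grad1 {n1 n2 : ℕ} (f : ((Fin n1 → ℝ) × (Fin n2 → ℝ)) → ℝ)
    (x : (Fin n1 → ℝ) × (Fin n2 → ℝ)) : Fin n1 → ℝ :=
  fun i => fderiv ℝ f x (Pi.single i 1, 0)

noncomputable def grad2 {n1 n2 : ℕ} (f : ((Fin n1 → ℝ) × (Fin n2 → ℝ)) → ℝ)
    (x : (Fin n1 → ℝ) × (Fin n2 → ℝ)) : Fin n2 → ℝ :=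
  fun j => fderiv ℝ f x (0, Pi.single j 1)

/-- A discrete gradient for a scalar function on an open set of `ℝⁿ`:
continuity, directionality and consistency. -/
def IsDiscreteGradient {n : ℕ} (X : Set (Fin n → ℝ)) (f : (Fin n → ℝ) → ℝ)
    (Df : (Fin n → ℝ) → (Fin n → ℝ) → (Fin n → ℝ)) : Prop :=
  ContinuousOn (fun p : (Fin n → ℝ) × (Fin n → ℝ) => Df p.1 p.2) (X ×ˢ X) ∧
  (∀ x ∈ X, ∀ x' ∈ X, Df x x' ⬝ᵥ (x' - x) = f x' - f x) ∧
  (∀ x ∈ X, Df x x = grad f x)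

/-- A discrete gradient for a scalar function on a product space
`ℝ^{n₁} × ℝ^{n₂}`, with the dot product and gradient taken blockwise. -/
def IsDiscreteGradientProd {n1 n2 : ℕ} (X : Set ((Fin n1 → ℝ) × (Fin n2 → ℝ)))
    (f : ((Fin n1 → ℝ) × (Fin n2 → ℝ)) → ℝ)
    (Df : ((Fin n1 → ℝ) × (Fin n2 → ℝ)) → ((Fin n1 → ℝ) × (Fin n2 → ℝ)) →
      (Fin n1 → ℝ) × (Fin n2 → ℝ)) : Prop :=
  ContinuousOn (fun p : ((Fin n1 → ℝ) × (Fin n2 → ℝ)) × ((Fin n1 → ℝ) × (Fin n2 → ℝ)) =>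
    Df p.1 p.2) (X ×ˢ X) ∧
  (∀ x ∈ X, ∀ x' ∈ X,
    (Df x x').1 ⬝ᵥ (x'.1 - x.1) + (Df x x').2 ⬝ᵥ (x'.2 - x.2) = f x' - f x) ∧
  (∀ x ∈ X, Df x x = (grad1 f x, grad2 f x))

/-- lifting a discrete gradient of the specified function `f₁`
to a discrete gradient of `f` by padding with zero. -/
theorem discrete_gradient_of_specified {n1 n2 : ℕ}
    (X1 : Set (Fin n1 → ℝ)) (X2 : Set (Fin n2 → ℝ))
    (hX1 : IsOpen X1) (hX2 : IsOpen X2) (hX2conv : Convex ℝ X2)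
    (f : ((Fin n1 → ℝ) × (Fin n2 → ℝ)) → ℝ)
    (hf : ContDiffOn ℝ 1 f (X1 ×ˢ X2))
    (hgrad2 : ∀ x ∈ X1 ×ˢ X2, grad2 f x = 0)
    (f1 : (Fin n1 → ℝ) → ℝ) (hf1 : ContDiffOn ℝ 1 f1 X1)
    (hval : ∀ x1 ∈ X1, ∀ x2 ∈ X2, f1 x1 = f (x1, x2))
    (hgrad : ∀ x1 ∈ X1, ∀ x2 ∈ X2, grad f1 x1 = grad1 f (x1, x2))
    (Df1 : (Fin n1 → ℝ) → (Fin n1 → ℝ) → (Fin n1 → ℝ))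
    (hDf1 : IsDiscreteGradient X1 f1 Df1) :
    IsDiscreteGradientProd (X1 ×ˢ X2) f (fun x x' => (Df1 x.1 x'.1, 0)) := by
  obtain ⟨hcont, hdir, hcons⟩ := hDf1
  refine ⟨?_, ?_, ?_⟩
  · apply ContinuousOn.prodMk
    · have : ContinuousOn
          (fun p : ((Fin n1 → ℝ) × (Fin n2 → ℝ)) × ((Fin n1 → ℝ) × (Fin n2 → ℝ)) =>
            (p.1.1, p.2.1)) ((X1 ×ˢ X2) ×ˢ (X1 ×ˢ X2)) :=
        (continuous_fst.fst.prodMk continuous_snd.fst).continuousOn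
      exact hcont.comp this (fun p hp => ⟨hp.1.1, hp.2.1⟩)
    · exact continuousOn_const
  · rintro ⟨x1, x2⟩ ⟨hx1, hx2⟩ ⟨y1, y2⟩ ⟨hy1, hy2⟩
    simp only
    rw [show (0 : Fin n2 → ℝ) ⬝ᵥ (y2 - x2) = 0 from zero_dotProduct _, add_zero,
      hdir x1 hx1 y1 hy1, ← hval x1 hx1 x2 hx2, ← hval y1 hy1 y2 hy2]
  · rintro ⟨x1, x2⟩ ⟨hx1, hx2⟩
    simp only
    rw [hcons x1 hx1, hgrad x1 hx1 x2 hx2, ← hgrad2 (x1, x2) ⟨hx1, hx2⟩]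
end

section
/- Let (E,z) be a semi-explicit gradient pair for H on X = X₁ × X₂, and write z = (z₁,z₂) with z₁ taking values in ℝ^{n₁}. Then there exists H₁ ∈ C¹(X₁,ℝ) such that H₁(x₁) = H(x₁,x₂) and ∇H₁(x₁) = ∇_{x₁} H(x₁,x₂) for all (x₁,x₂) ∈ X, and moreover ∇H₁(x₁) = E₁₁(x₁,x₂)ᵀ z₁(x₁,x₂) holds for all (x₁,x₂) ∈ X. -/
open Matrix Set

/-!
Since `E = diag(E₁₁, 0)`, the second block row of `Eᵀ z = ∇H` says `∇_{x₂} H = 0`, so on the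
convex fibres `{x₁} × X₂` the function `H` is constant by the mean value inequality. Hence
`H₁(x₁) := H(x₁, x₂⁰)` for any fixed `x₂⁰ ∈ X₂` agrees with `H(·, x₂)` near every `x₁ ∈ X₁`
(`X₁` is open), so `∇H₁(x₁) = ∇_{x₁} H(x₁, x₂)`, and the first block row gives
`∇_{x₁} H = E₁₁ᵀ z₁`.
-/

theorem Matrix.fromBlocks_zero_transpose_mulVec_sumElim {l m n o R : Type*} [Fintype n]
    [Fintype o] [NonUnitalNonAssocSemiring R] (A : Matrix n l R) (u : n → R) (v : o → R) :
    (fromBlocks A 0 0 (0 : Matrix o m R))ᵀ *ᵥ Sum.elim u v = Sum.elim (Aᵀ *ᵥ u) 0 := by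
  simp [fromBlocks_transpose, fromBlocks_mulVec]

theorem fderiv_comp_inr_eq_zero_of_grad2_eq_zero {n1 n2 : ℕ}
    {f : ((Fin n1 → ℝ) × (Fin n2 → ℝ)) → ℝ} {x : (Fin n1 → ℝ) × (Fin n2 → ℝ)}
    (h : grad2 f x = 0) :
    (fderiv ℝ f x).comp (ContinuousLinearMap.inr ℝ (Fin n1 → ℝ) (Fin n2 → ℝ)) = 0 :=
  ContinuousLinearMap.coe_injective <| (Pi.basisFun ℝ (Fin n2)).ext fun j => by
    simpa [grad2] using congrFun h j

theorem Convex.apply_prodMk_eq_of_fderiv_comp_inr_eq_zero {E F G : Type*}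
    [NormedAddCommGroup E] [NormedSpace ℝ E] [NormedAddCommGroup F] [NormedSpace ℝ F]
    [NormedAddCommGroup G] [NormedSpace ℝ G] {f : E × F → G} {x : E} {t : Set F}
    (ht : Convex ℝ t) (hf : ∀ y ∈ t, DifferentiableAt ℝ f (x, y))
    (hf' : ∀ y ∈ t, (fderiv ℝ f (x, y)).comp (ContinuousLinearMap.inr ℝ E F) = 0)
    {y y' : F} (hy : y ∈ t) (hy' : y' ∈ t) : f (x, y) = f (x, y') := by
  have hderiv : ∀ w ∈ t, HasFDerivWithinAt (fun w => f (x, w)) 0 t w := fun w hw => by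
    rw [← hf' w hw]
    exact ((hf w hw).hasFDerivAt.comp w (hasFDerivAt_prodMk_right x w)).hasFDerivWithinAt
  have hle := ht.norm_image_sub_le_of_norm_hasFDerivWithin_le hderiv
    (fun _ _ => norm_zero.le) hy' hy
  rw [zero_mul, norm_le_zero_iff, sub_eq_zero] at hle
  exact hle

theorem Filter.EventuallyEq.grad_eq {n : ℕ} {f g : (Fin n → ℝ) → ℝ} {x : Fin n → ℝ}
    (h : f =ᶠ[nhds x] g) : grad f x = grad g x := by
  unfold grad
  rw [h.fderiv_eq]

theorem grad_apply_prodMk_left {n1 n2 : ℕ} {f : ((Fin n1 → ℝ) × (Fin n2 → ℝ)) → ℝ}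
    {x1 : Fin n1 → ℝ} {x2 : Fin n2 → ℝ} (hf : DifferentiableAt ℝ f (x1, x2)) :
    grad (fun y => f (y, x2)) x1 = grad1 f (x1, x2) := by
  have hcomp : HasFDerivAt (fun y => f (y, x2))
      ((fderiv ℝ f (x1, x2)).comp (ContinuousLinearMap.inl ℝ (Fin n1 → ℝ) (Fin n2 → ℝ))) x1 :=
    hf.hasFDerivAt.comp x1 (hasFDerivAt_prodMk_left x1 x2)
  funext i
  rw [grad, hcomp.fderiv]
  rfl

theorem semiExplicit_gradient_pair_specified_Hamiltonian_general {n1 n2 : ℕ}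
    (X1 : Set (Fin n1 → ℝ)) (X2 : Set (Fin n2 → ℝ))
    (hX1 : IsOpen X1) (hX2 : IsOpen X2) (hX2conv : Convex ℝ X2)
    (H : ((Fin n1 → ℝ) × (Fin n2 → ℝ)) → ℝ)
    (hH : ContDiffOn ℝ 1 H (X1 ×ˢ X2))
    (E11 : ((Fin n1 → ℝ) × (Fin n2 → ℝ)) → Matrix (Fin n1) (Fin n1) ℝ)
    (z1 : ((Fin n1 → ℝ) × (Fin n2 → ℝ)) → (Fin n1 → ℝ))
    (z2 : ((Fin n1 → ℝ) × (Fin n2 → ℝ)) → (Fin n2 → ℝ))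
    (hgradpair : ∀ x ∈ X1 ×ˢ X2,
      (Matrix.fromBlocks (E11 x) 0 0 0 : Matrix (Fin n1 ⊕ Fin n2) (Fin n1 ⊕ Fin n2) ℝ)ᵀ.mulVec
          (Sum.elim (z1 x) (z2 x))
        = Sum.elim (grad1 H x) (grad2 H x)) :
    ∃ H1 : (Fin n1 → ℝ) → ℝ, ContDiffOn ℝ 1 H1 X1 ∧
      ∀ x1 ∈ X1, ∀ x2 ∈ X2,
        H1 x1 = H (x1, x2) ∧
        grad H1 x1 = grad1 H (x1, x2) ∧
        grad H1 x1 = (E11 (x1, x2))ᵀ.mulVec (z1 (x1, x2)) := by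
  obtain hempty | ⟨x20, hx20⟩ := X2.eq_empty_or_nonempty
  · exact ⟨0, contDiffOn_const, fun _ _ x2 hx2 => absurd hx2 (hempty ▸ notMem_empty x2)⟩
  have hHdiff : ∀ x ∈ X1 ×ˢ X2, DifferentiableAt ℝ H x := fun x hx =>
    (hH.contDiffAt ((hX1.prod hX2).mem_nhds hx)).differentiableAt one_ne_zero
  have hblocks : ∀ x ∈ X1 ×ˢ X2, (E11 x)ᵀ *ᵥ z1 x = grad1 H x ∧ 0 = grad2 H x := fun x hx =>
    Sum.elim_eq_iff.mp <| (fromBlocks_zero_transpose_mulVec_sumElim _ _ _).symm.trans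
      (hgradpair x hx)
  have hconst : ∀ x1 ∈ X1, ∀ y ∈ X2, ∀ y' ∈ X2, H (x1, y) = H (x1, y') :=
    fun x1 hx1 _ hy _ hy' => hX2conv.apply_prodMk_eq_of_fderiv_comp_inr_eq_zero
      (fun w hw => hHdiff _ ⟨hx1, hw⟩)
      (fun w hw => fderiv_comp_inr_eq_zero_of_grad2_eq_zero (hblocks _ ⟨hx1, hw⟩).2.symm) hy hy'
  refine ⟨fun y => H (y, x20),
    hH.comp (contDiff_id.prodMk contDiff_const).contDiffOn fun _ hy => ⟨hy, hx20⟩,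
    fun x1 hx1 x2 hx2 => ?_⟩
  have hgrad : grad (fun y => H (y, x20)) x1 = grad1 H (x1, x2) := by
    have hlocal : (fun y => H (y, x20)) =ᶠ[nhds x1] fun y => H (y, x2) :=
      Filter.mem_of_superset (hX1.mem_nhds hx1) fun y hy => hconst y hy x20 hx20 x2 hx2
    rw [hlocal.grad_eq, grad_apply_prodMk_left (hHdiff _ ⟨hx1, hx2⟩)]
  exact ⟨hconst x1 hx1 x20 hx20 x2 hx2, hgrad, hgrad.trans (hblocks _ ⟨hx1, hx2⟩).1.symm⟩

/-- a semi-explicit gradient pair `(E, z)` with `E = diag(E₁₁, 0)` admits a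
specified Hamiltonian `H₁`, and the gradient pair property reduces to
`∇H₁(x₁) = E₁₁(x₁,x₂)ᵀ z₁(x₁,x₂)`. -/
theorem semiExplicit_gradient_pair_specified_Hamiltonian {n1 n2 : ℕ}
    (X1 : Set (Fin n1 → ℝ)) (X2 : Set (Fin n2 → ℝ))
    (hX1 : IsOpen X1) (hX2 : IsOpen X2) (hX2conv : Convex ℝ X2)
    (H : ((Fin n1 → ℝ) × (Fin n2 → ℝ)) → ℝ)
    (hH : ContDiffOn ℝ 1 H (X1 ×ˢ X2))
    (E11 : ((Fin n1 → ℝ) × (Fin n2 → ℝ)) → Matrix (Fin n1) (Fin n1) ℝ)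
    (hE11cont : ContinuousOn E11 (X1 ×ˢ X2))
    (hE11inv : ∀ x ∈ X1 ×ˢ X2, IsUnit (E11 x).det)
    (z1 : ((Fin n1 → ℝ) × (Fin n2 → ℝ)) → (Fin n1 → ℝ))
    (z2 : ((Fin n1 → ℝ) × (Fin n2 → ℝ)) → (Fin n2 → ℝ))
    (hzcont : ContinuousOn (fun x => (z1 x, z2 x)) (X1 ×ˢ X2))
    (hgradpair : ∀ x ∈ X1 ×ˢ X2,
      (Matrix.fromBlocks (E11 x) 0 0 0 : Matrix (Fin n1 ⊕ Fin n2) (Fin n1 ⊕ Fin n2) ℝ)ᵀ.mulVec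
          (Sum.elim (z1 x) (z2 x))
        = Sum.elim (grad1 H x) (grad2 H x)) :
    ∃ H1 : (Fin n1 → ℝ) → ℝ, ContDiffOn ℝ 1 H1 X1 ∧
      ∀ x1 ∈ X1, ∀ x2 ∈ X2,
        H1 x1 = H (x1, x2) ∧
        grad H1 x1 = grad1 H (x1, x2) ∧
        grad H1 x1 = (E11 (x1, x2))ᵀ.mulVec (z1 (x1, x2)) :=
  semiExplicit_gradient_pair_specified_Hamiltonian_general X1 X2 hX1 hX2 hX2conv H hH E11 z1 z2
    hgradpair
end

section
/- Let (E,z) be a gradient pair for H ∈ C¹(X,ℝ) on an open set X ⊆ ℝⁿ, and let (Ē,z̄) be a discrete gradient pair for (H,E,z). Let h > 0, let J̄, R̄ : X × X → ℝ^{n×n} and B̄ : X × X → ℝ^{n×m} be continuous with J̄(x,x') = −J̄(x,x')ᵀ and R̄(x,x') symmetric positive semi-definite for all x,x' ∈ X. Suppose x^k, x^{k+1} ∈ X, u^k ∈ ℝᵐ, y^k ∈ ℝᵐ satisfy Ē(x^k,x^{k+1})(x^{k+1} − x^k) = h (J̄(x^k,x^{k+1}) − R̄(x^k,x^{k+1}))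 z̄(x^k,x^{k+1}) + h B̄(x^k,x^{k+1}) u^k and y^k = B̄(x^k,x^{k+1})ᵀ z̄(x^k,x^{k+1}). Then H(x^{k+1}) − H(x^k) = −h z̄(x^k,x^{k+1})ᵀ R̄(x^k,x^{k+1}) z̄(x^k,x^{k+1}) + h (y^k)ᵀ u^k, and in particular H(x^{k+1}) − H(x^k) ≤ h (y^k)ᵀ u^k. -/
open Matrix Set

/-- A discrete gradient pair `(Ē, z̄)` for `(H, E, z)`: continuity, directionality,
and consistency with `E` and `z` on the diagonal. -/
def IsDiscreteGradientPair {n : ℕ} (X : Set (Fin n → ℝ)) (H : (Fin n → ℝ) → ℝ)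
    (E : (Fin n → ℝ) → Matrix (Fin n) (Fin n) ℝ) (z : (Fin n → ℝ) → (Fin n → ℝ))
    (Ebar : (Fin n → ℝ) → (Fin n → ℝ) → Matrix (Fin n) (Fin n) ℝ)
    (zbar : (Fin n → ℝ) → (Fin n → ℝ) → (Fin n → ℝ)) : Prop :=
  ContinuousOn (fun p : (Fin n → ℝ) × (Fin n → ℝ) => Ebar p.1 p.2) (X ×ˢ X) ∧
  ContinuousOn (fun p : (Fin n → ℝ) × (Fin n → ℝ) => zbar p.1 p.2) (X ×ˢ X) ∧
  (∀ x ∈ X, ∀ x' ∈ X, zbar x x' ⬝ᵥ (Ebar x x').mulVec (x' - x) = H x' - H x) ∧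
  (∀ x ∈ X, Ebar x x = E x) ∧
  (∀ x ∈ X, zbar x x = z x)

/-
Pair the step equation with z̄. By the directionality of the discrete gradient pair the left side
becomes H(x^{k+1}) − H(x^k); on the right the skew-symmetric part contributes z̄ᵀ J̄ z̄ = 0 and the
input part is z̄ᵀ B̄ u = (B̄ᵀ z̄)ᵀ u = yᵀ u. What remains, −h z̄ᵀ R̄ z̄, is nonpositive since R̄ ⪰ 0.
-/

namespace Matrix

variable {ι κ α : Type*} [Fintype ι] [Fintype κ] [CommRing α] [IsAddTorsionFree α]

theorem dotProduct_mulVec_self_eq_zero_of_transpose_eq_neg {J : Matrix ι ι α} (hJ : Jᵀ = -J)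
    (v : ι → α) : v ⬝ᵥ J *ᵥ v = 0 := by
  refine self_eq_neg.mp ?_
  calc v ⬝ᵥ J *ᵥ v = Jᵀ *ᵥ v ⬝ᵥ v := by rw [dotProduct_mulVec, mulVec_transpose]
    _ = -(v ⬝ᵥ J *ᵥ v) := by rw [hJ, neg_mulVec, neg_dotProduct, dotProduct_comm]

theorem dotProduct_smul_sub_mulVec_add_smul_mulVec_of_transpose_eq_neg {J R : Matrix ι ι α}
    (hJ : Jᵀ = -J) (B : Matrix ι κ α) (v : ι → α) (u : κ → α) (h : α) :
    v ⬝ᵥ (h • ((J - R) *ᵥ v) + h • (B *ᵥ u)) = -(h * (v ⬝ᵥ R *ᵥ v)) + h * (Bᵀ *ᵥ v ⬝ᵥ u) := by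
  have hB : v ⬝ᵥ B *ᵥ u = Bᵀ *ᵥ v ⬝ᵥ u := by rw [mulVec_transpose, dotProduct_mulVec]
  rw [dotProduct_add, dotProduct_smul, dotProduct_smul, sub_mulVec, dotProduct_sub,
    dotProduct_mulVec_self_eq_zero_of_transpose_eq_neg hJ, hB, smul_eq_mul, smul_eq_mul]
  ring

end Matrix

theorem discrete_gradient_pair_scheme_power_balance_general {n m : ℕ}
    (X : Set (Fin n → ℝ))
    (H : (Fin n → ℝ) → ℝ)
    (E : (Fin n → ℝ) → Matrix (Fin n) (Fin n) ℝ) (z : (Fin n → ℝ) → (Fin n → ℝ))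
    (Ebar : (Fin n → ℝ) → (Fin n → ℝ) → Matrix (Fin n) (Fin n) ℝ)
    (zbar : (Fin n → ℝ) → (Fin n → ℝ) → (Fin n → ℝ))
    (hpair : IsDiscreteGradientPair X H E z Ebar zbar)
    (h : ℝ) (hh : 0 < h)
    (Jbar Rbar : (Fin n → ℝ) → (Fin n → ℝ) → Matrix (Fin n) (Fin n) ℝ)
    (Bbar : (Fin n → ℝ) → (Fin n → ℝ) → Matrix (Fin n) (Fin m) ℝ)
    (hJskew : ∀ x ∈ X, ∀ x' ∈ X, (Jbar x x')ᵀ = -(Jbar x x'))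
    (hRpsd : ∀ x ∈ X, ∀ x' ∈ X, (Rbar x x').PosSemidef)
    (xk xk1 : Fin n → ℝ) (hxk : xk ∈ X) (hxk1 : xk1 ∈ X)
    (uk yk : Fin m → ℝ)
    (hstep : (Ebar xk xk1).mulVec (xk1 - xk)
      = h • ((Jbar xk xk1 - Rbar xk xk1).mulVec (zbar xk xk1))
        + h • ((Bbar xk xk1).mulVec uk))
    (hout : yk = (Bbar xk xk1)ᵀ.mulVec (zbar xk xk1)) :
    H xk1 - H xk
      = -(h * (zbar xk xk1 ⬝ᵥ (Rbar xk xk1).mulVec (zbar xk xk1))) + h * (yk ⬝ᵥ uk)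
    ∧ H xk1 - H xk ≤ h * (yk ⬝ᵥ uk) := by
  have balance : H xk1 - H xk
      = -(h * (zbar xk xk1 ⬝ᵥ (Rbar xk xk1).mulVec (zbar xk xk1))) + h * (yk ⬝ᵥ uk) := by
    rw [← hpair.2.2.1 xk hxk xk1 hxk1, hstep, hout]
    exact dotProduct_smul_sub_mulVec_add_smul_mulVec_of_transpose_eq_neg (hJskew xk hxk xk1 hxk1) ..
  have dissipation : 0 ≤ zbar xk xk1 ⬝ᵥ (Rbar xk xk1).mulVec (zbar xk xk1) := by
    simpa using (hRpsd xk hxk xk1 hxk1).dotProduct_mulVec_nonneg (zbar xk xk1)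
  refine ⟨balance, ?_⟩
  rw [balance]
  linarith [mul_nonneg hh.le dissipation]

/-- discrete power balance and dissipation inequality for the
discrete gradient pair scheme applied to a general pHDAE. -/
theorem discrete_gradient_pair_scheme_power_balance {n m : ℕ}
    (X : Set (Fin n → ℝ)) (hX : IsOpen X)
    (H : (Fin n → ℝ) → ℝ) (hH : ContDiffOn ℝ 1 H X)
    (E : (Fin n → ℝ) → Matrix (Fin n) (Fin n) ℝ) (z : (Fin n → ℝ) → (Fin n → ℝ))
    (hEcont : ContinuousOn E X) (hzcont : ContinuousOn z X)
    (hgradpair : ∀ x ∈ X, (E x)ᵀ.mulVec (z x) = grad H x)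
    (Ebar : (Fin n → ℝ) → (Fin n → ℝ) → Matrix (Fin n) (Fin n) ℝ)
    (zbar : (Fin n → ℝ) → (Fin n → ℝ) → (Fin n → ℝ))
    (hpair : IsDiscreteGradientPair X H E z Ebar zbar)
    (h : ℝ) (hh : 0 < h)
    (Jbar Rbar : (Fin n → ℝ) → (Fin n → ℝ) → Matrix (Fin n) (Fin n) ℝ)
    (Bbar : (Fin n → ℝ) → (Fin n → ℝ) → Matrix (Fin n) (Fin m) ℝ)
    (hJcont : ContinuousOn (fun p : (Fin n → ℝ) × (Fin n → ℝ) => Jbar p.1 p.2) (X ×ˢ X))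
    (hRcont : ContinuousOn (fun p : (Fin n → ℝ) × (Fin n → ℝ) => Rbar p.1 p.2) (X ×ˢ X))
    (hBcont : ContinuousOn (fun p : (Fin n → ℝ) × (Fin n → ℝ) => Bbar p.1 p.2) (X ×ˢ X))
    (hJskew : ∀ x ∈ X, ∀ x' ∈ X, (Jbar x x')ᵀ = -(Jbar x x'))
    (hRpsd : ∀ x ∈ X, ∀ x' ∈ X, (Rbar x x').PosSemidef)
    (xk xk1 : Fin n → ℝ) (hxk : xk ∈ X) (hxk1 : xk1 ∈ X)
    (uk yk : Fin m → ℝ)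
    (hstep : (Ebar xk xk1).mulVec (xk1 - xk)
      = h • ((Jbar xk xk1 - Rbar xk xk1).mulVec (zbar xk xk1))
        + h • ((Bbar xk xk1).mulVec uk))
    (hout : yk = (Bbar xk xk1)ᵀ.mulVec (zbar xk xk1)) :
    H xk1 - H xk
      = -(h * (zbar xk xk1 ⬝ᵥ (Rbar xk xk1).mulVec (zbar xk xk1))) + h * (yk ⬝ᵥ uk)
    ∧ H xk1 - H xk ≤ h * (yk ⬝ᵥ uk) :=
  discrete_gradient_pair_scheme_power_balance_general X H E z Ebar zbar hpair h hh Jbar Rbar Bbar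
    hJskew hRpsd xk xk1 hxk hxk1 uk yk hstep hout
end

section
/- Let (E,z) be a gradient pair for H ∈ C¹(X,ℝ) on an open set X ⊆ ℝⁿ, let X̃ ⊆ ℝⁿ be open, let φ ∈ C¹(X̃,X) be a diffeomorphism, and let U : X̃ → ℝ^{n×n} be continuous and invertible at every point. Then the pair (Ẽ, z̃) defined by Ẽ(x̃) = U(x̃)ᵀ E(φ(x̃)) Dφ(x̃) and z̃(x̃) = U(x̃)^{-1} z(φ(x̃)) is a gradient pair for H̃ = H ∘ φ on X̃. -/
/-!
Writing `J = Dφ(x̃)`, the gauge matrix cancels: `(Uᵀ E J)ᵀ U⁻¹ z = Jᵀ Eᵀ U U⁻¹ z = Jᵀ (Eᵀ z)`.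
By the gradient-pair property at `φ(x̃)` this is `Jᵀ ∇H(φ(x̃))`, which is `∇(H ∘ φ)(x̃)` by the
chain rule.
-/

open Matrix Set

/-- The Jacobian matrix of a vector-valued function. -/
noncomputable def jac {n m : ℕ} (f : (Fin n → ℝ) → (Fin m → ℝ)) (x : Fin n → ℝ) :
    Matrix (Fin m) (Fin n) ℝ :=
  Matrix.of fun i j => fderiv ℝ f x (Pi.single j 1) i

theorem ContinuousOn.matrix_inv {X R ι : Type*} [TopologicalSpace X] [NormedCommRing R]
    [CompleteSpace R] [Fintype ι] [DecidableEq ι] {U : X → Matrix ι ι R} {s : Set X}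
    (hU : ContinuousOn U s) (hdet : ∀ x ∈ s, IsUnit (U x).det) :
    ContinuousOn (fun x => (U x)⁻¹) s := fun x hx =>
  (continuousAt_matrix_inv (U x) (NormedRing.inverse_continuousAt (hdet x hx).unit)
    ).comp_continuousWithinAt (hU x hx)

theorem ContinuousOn.matrix_mulVec {X R ι κ : Type*} [TopologicalSpace X] [TopologicalSpace R]
    [NonUnitalNonAssocSemiring R] [IsTopologicalSemiring R] [Fintype κ]
    {A : X → Matrix ι κ R} {v : X → κ → R} {s : Set X}
    (hA : ContinuousOn A s) (hv : ContinuousOn v s) :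
    ContinuousOn (fun x => A x *ᵥ v x) s :=
  (continuous_fst.matrix_mulVec continuous_snd).comp_continuousOn (hA.prodMk hv)

theorem ContinuousOn.matrix_transpose {X R ι κ : Type*} [TopologicalSpace X] [TopologicalSpace R]
    {A : X → Matrix ι κ R} {s : Set X} (hA : ContinuousOn A s) :
    ContinuousOn (fun x => (A x)ᵀ) s :=
  continuous_id.matrix_transpose.comp_continuousOn hA

theorem ContDiffOn.continuousOn_jac {n m : ℕ} {f : (Fin n → ℝ) → (Fin m → ℝ)}
    {s : Set (Fin n → ℝ)} (hf : ContDiffOn ℝ 1 f s) (hs : IsOpen s) :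
    ContinuousOn (jac f) s := by
  have hf' := hf.continuousOn_fderiv_of_isOpen hs le_rfl
  unfold jac
  fun_prop

theorem fderiv_apply_eq_dotProduct_grad {n : ℕ} (f : (Fin n → ℝ) → ℝ) (x v : Fin n → ℝ) :
    fderiv ℝ f x v = v ⬝ᵥ grad f x := by
  conv_lhs => rw [pi_eq_sum_univ' v]
  simp only [map_sum, map_smul, smul_eq_mul, dotProduct, grad]

theorem grad_comp {n m : ℕ} {H : (Fin m → ℝ) → ℝ} {φ : (Fin n → ℝ) → (Fin m → ℝ)}
    {x : Fin n → ℝ} (hH : DifferentiableAt ℝ H (φ x)) (hφ : DifferentiableAt ℝ φ x) :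
    grad (H ∘ φ) x = (jac φ x)ᵀ *ᵥ grad H (φ x) := by
  ext i
  rw [grad, fderiv_comp x hH hφ, ContinuousLinearMap.comp_apply,
    fderiv_apply_eq_dotProduct_grad, mulVec_transpose, vecMul, dotProduct_comm]
  rfl

theorem Matrix.transpose_transpose_mul_mul_mulVec_inv_mulVec {R ι κ μ : Type*} [CommRing R]
    [Fintype ι] [DecidableEq ι] [Fintype κ] [Fintype μ]
    (U : Matrix ι ι R) (E : Matrix ι κ R) (J : Matrix κ μ R) (z : ι → R) (hU : IsUnit U.det) :
    (Uᵀ * E * J)ᵀ *ᵥ (U⁻¹ *ᵥ z) = Jᵀ *ᵥ (Eᵀ *ᵥ z) := by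
  rw [mulVec_mulVec, transpose_mul, transpose_mul, transpose_transpose, Matrix.mul_assoc,
    Matrix.mul_assoc, mul_nonsing_inv _ hU, Matrix.mul_one, mulVec_mulVec]

theorem transformed_gradient_pair_general {n : ℕ}
    (X Xt : Set (Fin n → ℝ)) (hX : IsOpen X) (hXt : IsOpen Xt)
    (H : (Fin n → ℝ) → ℝ) (hH : ContDiffOn ℝ 1 H X)
    (E : (Fin n → ℝ) → Matrix (Fin n) (Fin n) ℝ) (z : (Fin n → ℝ) → (Fin n → ℝ))
    (hEcont : ContinuousOn E X) (hzcont : ContinuousOn z X)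
    (hgradpair : ∀ x ∈ X, (E x)ᵀ.mulVec (z x) = grad H x)
    (φ : (Fin n → ℝ) → (Fin n → ℝ))
    (hφ : ContDiffOn ℝ 1 φ Xt) (hφmap : Set.MapsTo φ Xt X)
    -- U is continuous and pointwise invertible
    (U : (Fin n → ℝ) → Matrix (Fin n) (Fin n) ℝ)
    (hUcont : ContinuousOn U Xt) (hUinv : ∀ xt ∈ Xt, IsUnit (U xt).det) :
    ContinuousOn (fun xt => (U xt)ᵀ * E (φ xt) * jac φ xt) Xt ∧
    ContinuousOn (fun xt => ((U xt)⁻¹).mulVec (z (φ xt))) Xt ∧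
    ∀ xt ∈ Xt,
      ((U xt)ᵀ * E (φ xt) * jac φ xt)ᵀ.mulVec (((U xt)⁻¹).mulVec (z (φ xt)))
        = grad (H ∘ φ) xt := by
  have hφcont : ContinuousOn φ Xt := hφ.continuousOn
  refine ⟨?_, ?_, fun xt hxt => ?_⟩
  · exact (hUcont.matrix_transpose.mul (hEcont.comp hφcont hφmap)).mul
      (hφ.continuousOn_jac hXt)
  · exact (hUcont.matrix_inv hUinv).matrix_mulVec (hzcont.comp hφcont hφmap)
  have hHdiff : DifferentiableAt ℝ H (φ xt) :=
    (hH.differentiableOn one_ne_zero).differentiableAt (hX.mem_nhds (hφmap hxt))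
  have hφdiff : DifferentiableAt ℝ φ xt :=
    (hφ.differentiableOn one_ne_zero).differentiableAt (hXt.mem_nhds hxt)
  rw [transpose_transpose_mul_mul_mulVec_inv_mulVec _ _ _ _ (hUinv xt hxt),
    hgradpair _ (hφmap hxt), grad_comp hHdiff hφdiff]

/-- a gradient pair transformed by an invertible system
transformation `(φ, U)` is a gradient pair for the transformed Hamiltonian. -/
theorem transformed_gradient_pair {n : ℕ}
    (X Xt : Set (Fin n → ℝ)) (hX : IsOpen X) (hXt : IsOpen Xt)
    (H : (Fin n → ℝ) → ℝ) (hH : ContDiffOn ℝ 1 H X)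
    (E : (Fin n → ℝ) → Matrix (Fin n) (Fin n) ℝ) (z : (Fin n → ℝ) → (Fin n → ℝ))
    (hEcont : ContinuousOn E X) (hzcont : ContinuousOn z X)
    (hgradpair : ∀ x ∈ X, (E x)ᵀ.mulVec (z x) = grad H x)
    -- φ is a C¹ diffeomorphism from Xt onto X with C¹ inverse ψ
    (φ ψ : (Fin n → ℝ) → (Fin n → ℝ))
    (hφ : ContDiffOn ℝ 1 φ Xt) (hφmap : Set.MapsTo φ Xt X)
    (hψ : ContDiffOn ℝ 1 ψ X) (hψmap : Set.MapsTo ψ X Xt)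
    (hψφ : ∀ xt ∈ Xt, ψ (φ xt) = xt) (hφψ : ∀ x ∈ X, φ (ψ x) = x)
    -- U is continuous and pointwise invertible
    (U : (Fin n → ℝ) → Matrix (Fin n) (Fin n) ℝ)
    (hUcont : ContinuousOn U Xt) (hUinv : ∀ xt ∈ Xt, IsUnit (U xt).det) :
    ContinuousOn (fun xt => (U xt)ᵀ * E (φ xt) * jac φ xt) Xt ∧
    ContinuousOn (fun xt => ((U xt)⁻¹).mulVec (z (φ xt))) Xt ∧
    ∀ xt ∈ Xt,
      ((U xt)ᵀ * E (φ xt) * jac φ xt)ᵀ.mulVec (((U xt)⁻¹).mulVec (z (φ xt)))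
        = grad (H ∘ φ) xt :=
  transformed_gradient_pair_general X Xt hX hXt H hH E z hEcont hzcont hgradpair φ hφ hφmap U hUcont
    hUinv
end

section
/- Let (E,z) be a gradient pair for H on an open set X ⊆ ℝⁿ, let (Ē,z̄) be a discrete gradient pair for (H,E,z), and let J̄, R̄, B̄ be continuous maps on X × X with J̄ pointwise skew-symmetric and R̄ pointwise symmetric positive semi-definite. Let φ ∈ C¹(X̃,X) be a diffeomorphism, U : X̃ → ℝ^{n×n} continuous and pointwise invertible, D̄φ a discrete Jacobian for φ, and Ū a pointwise invertible consistent discretization of U. Define Ê = Ūᵀ(Ē∘φ)D̄φ, ẑ = Ū^{-1}(z̄∘φ), Ĵ = Ūᵀ(J̄∘φ)Ū, R̂ = Ūᵀ(R̄∘φ)Ū, B̂ = Ūᵀ(B̄∘φ), where (F∘φ)(x̃,x̃') := F(φ(x̃),φ(x̃')). Then for any h > 0, x^k, x^{k+1} ∈ X, u^k ∈ ℝᵐ, y^k ∈ ℝᵐ, the equations Ē(x^k,x^{k+1})(x^{k+1}−x^k) = h(J̄−R̄)(x^k,x^{k+1}) z̄(x^k,x^{k+1}) + h B̄(x^k,x^{k+1})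 u^k and y^k = B̄(x^k,x^{k+1})ᵀ z̄(x^k,x^{k+1}) hold if and only if, with x̃^k = φ^{-1}(x^k) and x̃^{k+1} = φ^{-1}(x^{k+1}), the equations Ê(x̃^k,x̃^{k+1})(x̃^{k+1}−x̃^k) = h(Ĵ−R̂)(x̃^k,x̃^{k+1}) ẑ(x̃^k,x̃^{k+1}) + h B̂(x̃^k,x̃^{k+1}) u^k and y^k = B̂(x̃^k,x̃^{k+1})ᵀ ẑ(x̃^k,x̃^{k+1}) hold. -/
open Matrix Set

def IsDiscreteJacobian {n m : ℕ} (X : Set (Fin n → ℝ)) (F : (Fin n → ℝ) → (Fin m → ℝ))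
    (DF : (Fin n → ℝ) → (Fin n → ℝ) → Matrix (Fin m) (Fin n) ℝ) : Prop :=
  ContinuousOn (fun p : (Fin n → ℝ) × (Fin n → ℝ) => DF p.1 p.2) (X ×ˢ X) ∧
  (∀ x ∈ X, ∀ x' ∈ X, (DF x x').mulVec (x' - x) = F x' - F x) ∧
  (∀ x ∈ X, DF x x = jac F x)

/-- the discrete gradient pair scheme is invariant under invertible
system transformations: one step of the scheme in the original coordinates is
equivalent to one step of the transformed scheme, up to the change of variables. -/
theorem discrete_gradient_pair_scheme_invariant {n m : ℕ}
    (X Xt : Set (Fin n → ℝ)) (hX : IsOpen X) (hXt : IsOpen Xt)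
    (H : (Fin n → ℝ) → ℝ) (hH : ContDiffOn ℝ 1 H X)
    (E : (Fin n → ℝ) → Matrix (Fin n) (Fin n) ℝ) (z : (Fin n → ℝ) → (Fin n → ℝ))
    (hEcont : ContinuousOn E X) (hzcont : ContinuousOn z X)
    (hgradpair : ∀ x ∈ X, (E x)ᵀ.mulVec (z x) = grad H x)
    (Ebar : (Fin n → ℝ) → (Fin n → ℝ) → Matrix (Fin n) (Fin n) ℝ)
    (zbar : (Fin n → ℝ) → (Fin n → ℝ) → (Fin n → ℝ))
    (hpair : IsDiscreteGradientPair X H E z Ebar zbar)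
    (Jbar Rbar : (Fin n → ℝ) → (Fin n → ℝ) → Matrix (Fin n) (Fin n) ℝ)
    (Bbar : (Fin n → ℝ) → (Fin n → ℝ) → Matrix (Fin n) (Fin m) ℝ)
    (hJcont : ContinuousOn (fun p : (Fin n → ℝ) × (Fin n → ℝ) => Jbar p.1 p.2) (X ×ˢ X))
    (hRcont : ContinuousOn (fun p : (Fin n → ℝ) × (Fin n → ℝ) => Rbar p.1 p.2) (X ×ˢ X))
    (hBcont : ContinuousOn (fun p : (Fin n → ℝ) × (Fin n → ℝ) => Bbar p.1 p.2) (X ×ˢ X))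
    (hJskew : ∀ x ∈ X, ∀ x' ∈ X, (Jbar x x')ᵀ = -(Jbar x x'))
    (hRpsd : ∀ x ∈ X, ∀ x' ∈ X, (Rbar x x').PosSemidef)
    -- φ is a C¹ diffeomorphism from Xt onto X with inverse ψ
    (φ ψ : (Fin n → ℝ) → (Fin n → ℝ))
    (hφ : ContDiffOn ℝ 1 φ Xt) (hφmap : Set.MapsTo φ Xt X)
    (hψ : ContDiffOn ℝ 1 ψ X) (hψmap : Set.MapsTo ψ X Xt)
    (hψφ : ∀ xt ∈ Xt, ψ (φ xt) = xt) (hφψ : ∀ x ∈ X, φ (ψ x) = x)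
    (U : (Fin n → ℝ) → Matrix (Fin n) (Fin n) ℝ)
    (hUcont : ContinuousOn U Xt) (hUinv : ∀ xt ∈ Xt, IsUnit (U xt).det)
    (Dφ : (Fin n → ℝ) → (Fin n → ℝ) → Matrix (Fin n) (Fin n) ℝ)
    (hDφ : IsDiscreteJacobian Xt φ Dφ)
    (Ub : (Fin n → ℝ) → (Fin n → ℝ) → Matrix (Fin n) (Fin n) ℝ)
    (hUbcont : ContinuousOn (fun p : (Fin n → ℝ) × (Fin n → ℝ) => Ub p.1 p.2) (Xt ×ˢ Xt))
    (hUbcons : ∀ xt ∈ Xt, Ub xt xt = U xt)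
    (hUbinv : ∀ xt ∈ Xt, ∀ xt' ∈ Xt, IsUnit (Ub xt xt').det)
    (h : ℝ) (hh : 0 < h)
    (xk xk1 : Fin n → ℝ) (hxk : xk ∈ X) (hxk1 : xk1 ∈ X)
    (uk yk : Fin m → ℝ) :
    ((Ebar xk xk1).mulVec (xk1 - xk)
        = h • ((Jbar xk xk1 - Rbar xk xk1).mulVec (zbar xk xk1))
          + h • ((Bbar xk xk1).mulVec uk)
      ∧ yk = (Bbar xk xk1)ᵀ.mulVec (zbar xk xk1))
    ↔
    (((Ub (ψ xk) (ψ xk1))ᵀ * Ebar (φ (ψ xk)) (φ (ψ xk1)) * Dφ (ψ xk) (ψ xk1)).mulVec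
          (ψ xk1 - ψ xk)
        = h • ((((Ub (ψ xk) (ψ xk1))ᵀ * Jbar (φ (ψ xk)) (φ (ψ xk1)) * Ub (ψ xk) (ψ xk1))
              - ((Ub (ψ xk) (ψ xk1))ᵀ * Rbar (φ (ψ xk)) (φ (ψ xk1)) * Ub (ψ xk) (ψ xk1))).mulVec
              (((Ub (ψ xk) (ψ xk1))⁻¹).mulVec (zbar (φ (ψ xk)) (φ (ψ xk1)))))
          + h • (((Ub (ψ xk) (ψ xk1))ᵀ * Bbar (φ (ψ xk)) (φ (ψ xk1))).mulVec uk)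
      ∧ yk = ((Ub (ψ xk) (ψ xk1))ᵀ * Bbar (φ (ψ xk)) (φ (ψ xk1)))ᵀ.mulVec
          (((Ub (ψ xk) (ψ xk1))⁻¹).mulVec (zbar (φ (ψ xk)) (φ (ψ xk1))))) := by
  have haXt := hψmap hxk
  have hbXt := hψmap hxk1
  rw [hφψ xk hxk, hφψ xk1 hxk1]
  set a := ψ xk
  set b := ψ xk1
  set Uk := Ub a b with hUk
  have hUdet : IsUnit Uk.det := hUbinv a haXt b hbXt
  have hUUinv : Uk * Uk⁻¹ = 1 := Matrix.mul_nonsing_inv _ hUdet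
  have hDφv : (Dφ a b).mulVec (b - a) = xk1 - xk := by
    rw [hDφ.2.1 a haXt b hbXt, hφψ xk hxk, hφψ xk1 hxk1]
  have hinj : Function.Injective (Ukᵀ.mulVec) := by
    apply Matrix.mulVec_injective_iff_isUnit.2
    rw [Matrix.isUnit_iff_isUnit_det, Matrix.det_transpose]
    exact hUdet
  have hL : (Ukᵀ * Ebar xk xk1 * Dφ a b).mulVec (b - a)
      = Ukᵀ.mulVec ((Ebar xk xk1).mulVec (xk1 - xk)) := by
    rw [← Matrix.mulVec_mulVec, ← Matrix.mulVec_mulVec, hDφv]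
  have hM : (Ukᵀ * Jbar xk xk1 * Uk - Ukᵀ * Rbar xk xk1 * Uk) * Uk⁻¹
      = Ukᵀ * (Jbar xk xk1 - Rbar xk xk1) := by
    rw [Matrix.sub_mul, Matrix.mul_assoc (Ukᵀ * Jbar xk xk1),
      Matrix.mul_assoc (Ukᵀ * Rbar xk xk1), hUUinv, Matrix.mul_one, Matrix.mul_one,
      ← Matrix.mul_sub]
  have hJR : ((Ukᵀ * Jbar xk xk1 * Uk - Ukᵀ * Rbar xk xk1 * Uk)).mulVec
        ((Uk⁻¹).mulVec (zbar xk xk1))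
      = Ukᵀ.mulVec ((Jbar xk xk1 - Rbar xk xk1).mulVec (zbar xk xk1)) := by
    rw [Matrix.mulVec_mulVec, hM, ← Matrix.mulVec_mulVec]
  have hB : (Ukᵀ * Bbar xk xk1).mulVec uk = Ukᵀ.mulVec ((Bbar xk xk1).mulVec uk) := by
    rw [← Matrix.mulVec_mulVec]
  have hB2 : (Ukᵀ * Bbar xk xk1)ᵀ.mulVec ((Uk⁻¹).mulVec (zbar xk xk1))
      = (Bbar xk xk1)ᵀ.mulVec (zbar xk xk1) := by
    rw [Matrix.transpose_mul, Matrix.transpose_transpose, Matrix.mulVec_mulVec,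
      Matrix.mul_assoc, hUUinv, Matrix.mul_one]
  constructor
  · rintro ⟨h1, h2⟩
    refine ⟨?_, by rw [hB2]; exact h2⟩
    rw [hL, hJR, hB, h1, Matrix.mulVec_add, Matrix.mulVec_smul, Matrix.mulVec_smul]
  · rintro ⟨h1, h2⟩
    refine ⟨?_, by rw [hB2] at h2; exact h2⟩
    apply hinj
    rw [← hL, h1, hJR, hB, Matrix.mulVec_add, Matrix.mulVec_smul, Matrix.mulVec_smul]
end

section
/- Let (E,z) be a semi-explicit gradient pair for H on X = X₁ × X₂ ⊆ ℝ^{n₁} × ℝ^{n₂}, let X̃ = X̃₁ × X̃₂ with X̃₁ ⊆ ℝ^{n₁} open and X̃₂ ⊆ ℝ^{n₂} open and convex, let φ = (φ₁,φ₂) ∈ C¹(X̃,X) be a diffeomorphism, and let U : X̃ → ℝ^{n×n} be continuous and pointwise invertible with block decomposition U = [[U₁₁, U₁₂],[U₂₁, U₂₂]] conforming to the splitting (n₁,n₂). Then the transformed gradient pair (Uᵀ(E∘φ)Dφ, U^{-1}(z∘φ)) for H∘φ is semi-explicit if and only if D_{x̃₂}φ₁(x̃) = 0 and U₁₂(x̃)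 = 0 for all x̃ ∈ X̃. -/
open Matrix Set

def basisP {n1 n2 : ℕ} (j : Fin n1 ⊕ Fin n2) : (Fin n1 → ℝ) × (Fin n2 → ℝ) :=
  Sum.elim (fun j1 => (Pi.single j1 1, 0)) (fun j2 => (0, Pi.single j2 1)) j

noncomputable def gradP {n1 n2 : ℕ} (f : ((Fin n1 → ℝ) × (Fin n2 → ℝ)) → ℝ)
    (x : (Fin n1 → ℝ) × (Fin n2 → ℝ)) : Fin n1 ⊕ Fin n2 → ℝ :=
  fun i => fderiv ℝ f x (basisP i)

noncomputable def jacP {n1 n2 : ℕ}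
    (f : ((Fin n1 → ℝ) × (Fin n2 → ℝ)) → ((Fin n1 → ℝ) × (Fin n2 → ℝ)))
    (x : (Fin n1 → ℝ) × (Fin n2 → ℝ)) :
    Matrix (Fin n1 ⊕ Fin n2) (Fin n1 ⊕ Fin n2) ℝ :=
  Matrix.of fun i j =>
    Sum.elim (fderiv ℝ f x (basisP j)).1 (fderiv ℝ f x (basisP j)).2 i

/-!
Write `M := Dφ`. Since `E = diag(E₁₁, 0)`, the `(i, j)` block of `Uᵀ (E ∘ φ) M` is
`U₁ᵢᵀ E₁₁ M₁ⱼ`. If the product is `diag(F, 0)` with `F` invertible, then `U₁₁`, `E₁₁` and `M₁₁`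
are invertible, so the vanishing blocks `U₁₁ᵀ E₁₁ M₁₂` and `U₁₂ᵀ E₁₁ M₁₁` force `M₁₂ = 0` and
`U₁₂ = 0`. Conversely, if `M₁₂ = 0` and `U₁₂ = 0` then `U` and `M` are block triangular, so their
invertibility (for `M`, because `φ` has a differentiable left inverse) passes to `U₁₁` and `M₁₁`,
and `F = U₁₁ᵀ E₁₁ M₁₁` works.
-/

open Filter Topology

namespace Matrix

variable {R : Type*} {m n : Type*} [Fintype m] [Fintype n]

theorem transpose_mul_fromBlocks_mul [Semiring R] (U M : Matrix (m ⊕ n) (m ⊕ n) R)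
    (E : Matrix m m R) :
    Uᵀ * fromBlocks E 0 0 0 * M =
      fromBlocks
        (U.toBlocks₁₁ᵀ * E * M.toBlocks₁₁) (U.toBlocks₁₁ᵀ * E * M.toBlocks₁₂)
        (U.toBlocks₁₂ᵀ * E * M.toBlocks₁₁) (U.toBlocks₁₂ᵀ * E * M.toBlocks₁₂) := by
  conv_lhs => rw [← fromBlocks_toBlocks U, ← fromBlocks_toBlocks M]
  simp [fromBlocks_transpose, fromBlocks_multiply, Matrix.mul_assoc]

theorem transpose_mul_fromBlocks_mul_of_toBlocks₁₂_eq_zero [Semiring R]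
    {U M : Matrix (m ⊕ n) (m ⊕ n) R} (E : Matrix m m R)
    (hM : M.toBlocks₁₂ = 0) (hU : U.toBlocks₁₂ = 0) :
    Uᵀ * fromBlocks E 0 0 0 * M = fromBlocks (U.toBlocks₁₁ᵀ * E * M.toBlocks₁₁) 0 0 0 := by
  simp [transpose_mul_fromBlocks_mul, hM, hU]

variable [CommRing R] [DecidableEq m]

theorem toBlocks₁₂_eq_zero_of_transpose_mul_fromBlocks_mul_eq
    {U M : Matrix (m ⊕ n) (m ⊕ n) R} {E F : Matrix m m R} (hF : IsUnit F.det)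
    (h : Uᵀ * fromBlocks E 0 0 0 * M = fromBlocks F 0 0 0) :
    M.toBlocks₁₂ = 0 ∧ U.toBlocks₁₂ = 0 := by
  rw [transpose_mul_fromBlocks_mul] at h
  obtain ⟨h₁₁, h₁₂, h₂₁, -⟩ := fromBlocks_inj.mp h
  rw [← h₁₁, det_mul, det_mul] at hF
  have hUE : IsUnit (U.toBlocks₁₁ᵀ * E).det := by
    rw [det_mul]; exact isUnit_of_mul_isUnit_left hF
  have hEM : IsUnit (E * M.toBlocks₁₁).det := by
    rw [det_mul]
    exact (isUnit_of_mul_isUnit_right (isUnit_of_mul_isUnit_left hF)).mul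
      (isUnit_of_mul_isUnit_right hF)
  constructor
  · rw [← nonsing_inv_mul_cancel_left _ M.toBlocks₁₂ hUE, h₁₂, Matrix.mul_zero]
  · rw [← transpose_eq_zero, ← mul_nonsing_inv_cancel_right _ U.toBlocks₁₂ᵀ hEM,
      ← Matrix.mul_assoc, h₂₁, Matrix.zero_mul]

theorem isUnit_det_toBlocks₁₁_of_toBlocks₁₂_eq_zero [DecidableEq n]
    {A : Matrix (m ⊕ n) (m ⊕ n) R} (hA : IsUnit A.det) (h : A.toBlocks₁₂ = 0) :
    IsUnit A.toBlocks₁₁.det := by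
  rw [← fromBlocks_toBlocks A, h, det_fromBlocks_zero₁₂] at hA
  exact isUnit_of_mul_isUnit_left hA

end Matrix

section LeftInverse

variable {𝕜 E : Type*} [NontriviallyNormedField 𝕜] [NormedAddCommGroup E] [NormedSpace 𝕜 E]

theorem isUnit_det_fderiv_of_leftInverse {φ ψ : E → E} {x : E}
    (hφ : DifferentiableAt 𝕜 φ x) (hψ : DifferentiableAt 𝕜 ψ (φ x)) (hψφ : ψ ∘ φ =ᶠ[𝓝 x] id) :
    IsUnit (LinearMap.det (fderiv 𝕜 φ x : E →ₗ[𝕜] E)) := by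
  have hcomp : (fderiv 𝕜 ψ (φ x)).comp (fderiv 𝕜 φ x) = ContinuousLinearMap.id 𝕜 E := by
    rw [← fderiv_comp x hψ hφ, hψφ.fderiv_eq, fderiv_id]
  refine IsUnit.of_mul_eq_one_right (LinearMap.det (fderiv 𝕜 ψ (φ x) : E →ₗ[𝕜] E)) ?_
  rw [← LinearMap.det_comp, ← ContinuousLinearMap.toLinearMap_comp, hcomp,
    ContinuousLinearMap.coe_id, LinearMap.det_id]

end LeftInverse

section Jacobian

variable {n1 n2 : ℕ}

noncomputable def basisFunProd (n1 n2 : ℕ) :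
    Module.Basis (Fin n1 ⊕ Fin n2) ℝ ((Fin n1 → ℝ) × (Fin n2 → ℝ)) :=
  (Pi.basisFun ℝ (Fin n1)).prod (Pi.basisFun ℝ (Fin n2))

theorem basisFunProd_apply (j : Fin n1 ⊕ Fin n2) : basisFunProd n1 n2 j = basisP j := by
  cases j <;> simp [basisFunProd, basisP, Module.Basis.prod_apply]

theorem jacP_eq_toMatrix (f : ((Fin n1 → ℝ) × (Fin n2 → ℝ)) → ((Fin n1 → ℝ) × (Fin n2 → ℝ)))
    (x : (Fin n1 → ℝ) × (Fin n2 → ℝ)) :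
    jacP f x = LinearMap.toMatrix (basisFunProd n1 n2) (basisFunProd n1 n2) (fderiv ℝ f x) := by
  ext i j
  rw [LinearMap.toMatrix_apply, basisFunProd_apply]
  cases i <;> simp [jacP, basisFunProd]

theorem toBlocks₁₂_jacP
    (f : ((Fin n1 → ℝ) × (Fin n2 → ℝ)) → ((Fin n1 → ℝ) × (Fin n2 → ℝ)))
    (x : (Fin n1 → ℝ) × (Fin n2 → ℝ)) :
    (jacP f x).toBlocks₁₂ = Matrix.of fun i j => (fderiv ℝ f x (0, Pi.single j 1)).1 i :=
  rfl

theorem isUnit_det_jacP_of_leftInverse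
    {φ ψ : ((Fin n1 → ℝ) × (Fin n2 → ℝ)) → ((Fin n1 → ℝ) × (Fin n2 → ℝ))}
    {x : (Fin n1 → ℝ) × (Fin n2 → ℝ)} (hφ : DifferentiableAt ℝ φ x)
    (hψ : DifferentiableAt ℝ ψ (φ x)) (hψφ : ψ ∘ φ =ᶠ[𝓝 x] id) :
    IsUnit (jacP φ x).det := by
  rw [jacP_eq_toMatrix, LinearMap.det_toMatrix]
  exact isUnit_det_fderiv_of_leftInverse hφ hψ hψφ

theorem ContDiffOn.continuousOn_jacP_of_isOpen
    {f : ((Fin n1 → ℝ) × (Fin n2 → ℝ)) → ((Fin n1 → ℝ) × (Fin n2 → ℝ))}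
    {s : Set ((Fin n1 → ℝ) × (Fin n2 → ℝ))} (hf : ContDiffOn ℝ 1 f s) (hs : IsOpen s) :
    ContinuousOn (jacP f) s := by
  have hjacP : jacP f = (LinearMap.toMatrix (basisFunProd n1 n2) (basisFunProd n1 n2) ∘ₗ
      ContinuousLinearMap.coeLM ℝ) ∘ fderiv ℝ f :=
    funext (jacP_eq_toMatrix f)
  rw [hjacP]
  exact (LinearMap.continuous_of_finiteDimensional _).comp_continuousOn
    (hf.continuousOn_fderiv_of_isOpen hs le_rfl)

end Jacobian

theorem semiExplicit_structure_preserving_iff_general {n1 n2 : ℕ}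
    (X1 : Set (Fin n1 → ℝ)) (X2 : Set (Fin n2 → ℝ))
    (hX1 : IsOpen X1) (hX2 : IsOpen X2)
    -- the semi-explicit gradient pair (E, z) on X = X1 × X2
    (E11 : ((Fin n1 → ℝ) × (Fin n2 → ℝ)) → Matrix (Fin n1) (Fin n1) ℝ)
    (hE11cont : ContinuousOn E11 (X1 ×ˢ X2))
    (hE11inv : ∀ x ∈ X1 ×ˢ X2, IsUnit (E11 x).det)
    -- an invertible system transformation (φ, U) from X̃ = X̃1 × X̃2
    (Xt1 : Set (Fin n1 → ℝ)) (Xt2 : Set (Fin n2 → ℝ))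
    (hXt1 : IsOpen Xt1) (hXt2 : IsOpen Xt2)
    (φ ψ : ((Fin n1 → ℝ) × (Fin n2 → ℝ)) → ((Fin n1 → ℝ) × (Fin n2 → ℝ)))
    (hφ : ContDiffOn ℝ 1 φ (Xt1 ×ˢ Xt2)) (hφmap : Set.MapsTo φ (Xt1 ×ˢ Xt2) (X1 ×ˢ X2))
    (hψ : ContDiffOn ℝ 1 ψ (X1 ×ˢ X2))
    (hψφ : ∀ xt ∈ Xt1 ×ˢ Xt2, ψ (φ xt) = xt)
    (U : ((Fin n1 → ℝ) × (Fin n2 → ℝ)) → Matrix (Fin n1 ⊕ Fin n2) (Fin n1 ⊕ Fin n2) ℝ)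
    (hUcont : ContinuousOn U (Xt1 ×ˢ Xt2))
    (hUinv : ∀ xt ∈ Xt1 ×ˢ Xt2, IsUnit (U xt).det) :
    -- the transformed gradient pair is semi-explicit
    (∃ F : ((Fin n1 → ℝ) × (Fin n2 → ℝ)) → Matrix (Fin n1) (Fin n1) ℝ,
      ContinuousOn F (Xt1 ×ˢ Xt2) ∧
      (∀ xt ∈ Xt1 ×ˢ Xt2, IsUnit (F xt).det) ∧
      (∀ xt ∈ Xt1 ×ˢ Xt2,
        (U xt)ᵀ * (Matrix.fromBlocks (E11 (φ xt)) 0 0 0 :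
            Matrix (Fin n1 ⊕ Fin n2) (Fin n1 ⊕ Fin n2) ℝ) * jacP φ xt
          = (Matrix.fromBlocks (F xt) 0 0 0 :
              Matrix (Fin n1 ⊕ Fin n2) (Fin n1 ⊕ Fin n2) ℝ)))
    ↔
    (∀ xt ∈ Xt1 ×ˢ Xt2,
      (Matrix.of fun (i : Fin n1) (j : Fin n2) =>
        (fderiv ℝ φ xt ((0 : Fin n1 → ℝ), Pi.single j 1)).1 i) = (0 : Matrix (Fin n1) (Fin n2) ℝ)
      ∧ (U xt).toBlocks₁₂ = 0) := by
  have hXt : IsOpen (Xt1 ×ˢ Xt2) := hXt1.prod hXt2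
  have hJinv : ∀ xt ∈ Xt1 ×ˢ Xt2, IsUnit (jacP φ xt).det := fun xt hxt =>
    isUnit_det_jacP_of_leftInverse
      ((hφ.differentiableOn one_ne_zero).differentiableAt (hXt.mem_nhds hxt))
      ((hψ.differentiableOn one_ne_zero).differentiableAt
        ((hX1.prod hX2).mem_nhds (hφmap hxt)))
      (eventually_of_mem (hXt.mem_nhds hxt) hψφ)
  simp only [← toBlocks₁₂_jacP]
  constructor
  · rintro ⟨F, -, hFinv, hF⟩ xt hxt
    exact toBlocks₁₂_eq_zero_of_transpose_mul_fromBlocks_mul_eq (hFinv xt hxt) (hF xt hxt)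
  · intro h
    refine ⟨fun xt => (U xt).toBlocks₁₁ᵀ * E11 (φ xt) * (jacP φ xt).toBlocks₁₁, ?_,
      fun xt hxt => ?_, fun xt hxt => ?_⟩
    · rw [continuousOn_iff_continuous_domRestrict] at hUcont ⊢
      have hJ := continuousOn_iff_continuous_domRestrict.mp (hφ.continuousOn_jacP_of_isOpen hXt)
      have hE := continuousOn_iff_continuous_domRestrict.mp (hE11cont.comp hφ.continuousOn hφmap)
      exact ((hUcont.matrix_submatrix Sum.inl Sum.inl).matrix_transpose.matrix_mul hE).matrix_mul
        (hJ.matrix_submatrix Sum.inl Sum.inl)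
    · obtain ⟨hJ12, hU12⟩ := h xt hxt
      have hU11 := isUnit_det_toBlocks₁₁_of_toBlocks₁₂_eq_zero (hUinv xt hxt) hU12
      have hJ11 := isUnit_det_toBlocks₁₁_of_toBlocks₁₂_eq_zero (hJinv xt hxt) hJ12
      rw [det_mul, det_mul, det_transpose]
      exact (hU11.mul (hE11inv _ (hφmap hxt))).mul hJ11
    · obtain ⟨hJ12, hU12⟩ := h xt hxt
      exact transpose_mul_fromBlocks_mul_of_toBlocks₁₂_eq_zero _ hJ12 hU12

/-- the transformed gradient pair of a semi-explicit gradient pair is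
semi-explicit if and only if `D_{x̃₂}φ₁ = 0` and `U₁₂ = 0` everywhere on `X̃`. -/
theorem semiExplicit_structure_preserving_iff {n1 n2 : ℕ}
    (X1 : Set (Fin n1 → ℝ)) (X2 : Set (Fin n2 → ℝ))
    (hX1 : IsOpen X1) (hX2 : IsOpen X2) (hX2conv : Convex ℝ X2)
    (H : ((Fin n1 → ℝ) × (Fin n2 → ℝ)) → ℝ) (hH : ContDiffOn ℝ 1 H (X1 ×ˢ X2))
    -- the semi-explicit gradient pair (E, z) on X = X1 × X2
    (E11 : ((Fin n1 → ℝ) × (Fin n2 → ℝ)) → Matrix (Fin n1) (Fin n1) ℝ)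
    (hE11cont : ContinuousOn E11 (X1 ×ˢ X2))
    (hE11inv : ∀ x ∈ X1 ×ˢ X2, IsUnit (E11 x).det)
    (z : ((Fin n1 → ℝ) × (Fin n2 → ℝ)) → (Fin n1 ⊕ Fin n2 → ℝ))
    (hzcont : ContinuousOn z (X1 ×ˢ X2))
    (hgradpair : ∀ x ∈ X1 ×ˢ X2,
      (Matrix.fromBlocks (E11 x) 0 0 0 :
        Matrix (Fin n1 ⊕ Fin n2) (Fin n1 ⊕ Fin n2) ℝ)ᵀ.mulVec (z x) = gradP H x)
    -- an invertible system transformation (φ, U) from X̃ = X̃1 × X̃2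
    (Xt1 : Set (Fin n1 → ℝ)) (Xt2 : Set (Fin n2 → ℝ))
    (hXt1 : IsOpen Xt1) (hXt2 : IsOpen Xt2) (hXt2conv : Convex ℝ Xt2)
    (φ ψ : ((Fin n1 → ℝ) × (Fin n2 → ℝ)) → ((Fin n1 → ℝ) × (Fin n2 → ℝ)))
    (hφ : ContDiffOn ℝ 1 φ (Xt1 ×ˢ Xt2)) (hφmap : Set.MapsTo φ (Xt1 ×ˢ Xt2) (X1 ×ˢ X2))
    (hψ : ContDiffOn ℝ 1 ψ (X1 ×ˢ X2)) (hψmap : Set.MapsTo ψ (X1 ×ˢ X2) (Xt1 ×ˢ Xt2))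
    (hψφ : ∀ xt ∈ Xt1 ×ˢ Xt2, ψ (φ xt) = xt) (hφψ : ∀ x ∈ X1 ×ˢ X2, φ (ψ x) = x)
    (U : ((Fin n1 → ℝ) × (Fin n2 → ℝ)) → Matrix (Fin n1 ⊕ Fin n2) (Fin n1 ⊕ Fin n2) ℝ)
    (hUcont : ContinuousOn U (Xt1 ×ˢ Xt2))
    (hUinv : ∀ xt ∈ Xt1 ×ˢ Xt2, IsUnit (U xt).det) :
    -- the transformed gradient pair is semi-explicit
    (∃ F : ((Fin n1 → ℝ) × (Fin n2 → ℝ)) → Matrix (Fin n1) (Fin n1) ℝ,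
      ContinuousOn F (Xt1 ×ˢ Xt2) ∧
      (∀ xt ∈ Xt1 ×ˢ Xt2, IsUnit (F xt).det) ∧
      (∀ xt ∈ Xt1 ×ˢ Xt2,
        (U xt)ᵀ * (Matrix.fromBlocks (E11 (φ xt)) 0 0 0 :
            Matrix (Fin n1 ⊕ Fin n2) (Fin n1 ⊕ Fin n2) ℝ) * jacP φ xt
          = (Matrix.fromBlocks (F xt) 0 0 0 :
              Matrix (Fin n1 ⊕ Fin n2) (Fin n1 ⊕ Fin n2) ℝ)))
    ↔
    (∀ xt ∈ Xt1 ×ˢ Xt2,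
      (Matrix.of fun (i : Fin n1) (j : Fin n2) =>
        (fderiv ℝ φ xt ((0 : Fin n1 → ℝ), Pi.single j 1)).1 i) = (0 : Matrix (Fin n1) (Fin n2) ℝ)
      ∧ (U xt).toBlocks₁₂ = 0) :=
  semiExplicit_structure_preserving_iff_general X1 X2 hX1 hX2 E11 hE11cont hE11inv Xt1 Xt2 hXt1 hXt2
    φ ψ hφ hφmap hψ hψφ U hUcont hUinv
end

section
/- Let (E,z) be a gradient pair for H ∈ C¹(X,ℝ) on an open set X ⊆ ℝⁿ, and suppose there exist an open set X̃ = X̃₁ × X̃₂ ⊆ ℝ^{n₁} × ℝ^{n₂} with X̃₂ convex, a diffeomorphism φ ∈ C¹(X̃,X), and a continuous pointwise invertible U : X̃ → ℝ^{n×n} such that the transformed pair (Uᵀ(E∘φ)Dφ, U^{-1}(z∘φ)) is a semi-explicit gradient pair. Then the rank of E(x) equals n₁ for every x ∈ X; in particular, E has constant rank on X. -/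
/-!
The transformed matrix `Uᵀ (E ∘ φ) Dφ` differs from `E ∘ φ` by invertible factors on both sides:
`U` is pointwise invertible by assumption, and `Dφ` is invertible by the chain rule, since `φ` has
the differentiable inverse `ψ`. Rank is invariant under such factors, so at `x = φ (ψ x)` the rank
of `E x` is that of `diag(E₁₁, 0)` with `E₁₁` invertible, namely `n₁`.
-/

open Matrix Set

open Filter Topology

theorem Matrix.rank_fromBlocks_zero₁₂_zero₂₁_zero₂₂ {m n K : Type*} [Fintype m] [Fintype n]
    [DecidableEq m] [DecidableEq n] [Field K] (A : Matrix m m K) (hA : IsUnit A.det) :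
    (fromBlocks A 0 0 0 : Matrix (m ⊕ n) (m ⊕ n) K).rank = Fintype.card m := by
  classical
  have hfactor : (fromBlocks A 0 0 0 : Matrix (m ⊕ n) (m ⊕ n) K)
      = fromBlocks A 0 0 1 * diagonal (Sum.elim 1 0) := by
    rw [← fromBlocks_diagonal, fromBlocks_multiply]
    simp
  have hunit : IsUnit (fromBlocks A 0 0 (1 : Matrix n n K)).det := by
    simpa [det_fromBlocks_zero₂₁] using hA
  rw [hfactor, rank_mul_eq_right_of_isUnit_det _ _ hunit, rank_diagonal]
  simp [Fintype.card_subtype, Finset.card_filter, Fintype.sum_sum_type]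

section Jacobian

variable {n1 n2 : ℕ}

noncomputable def stdBasisProd :
    Module.Basis (Fin n1 ⊕ Fin n2) ℝ ((Fin n1 → ℝ) × (Fin n2 → ℝ)) :=
  (Pi.basisFun ℝ (Fin n1)).prod (Pi.basisFun ℝ (Fin n2))

theorem stdBasisProd_apply (j : Fin n1 ⊕ Fin n2) : stdBasisProd j = basisP j := by
  rcases j with j | j <;> ext <;> simp [stdBasisProd, basisP, Module.Basis.prod_apply]

theorem stdBasisProd_repr (v : (Fin n1 → ℝ) × (Fin n2 → ℝ)) :
    stdBasisProd.repr v = Sum.elim v.1 v.2 := by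
  ext i
  rcases i with i | i <;> simp [stdBasisProd]

theorem jacP_eq_toMatrix_fderiv
    (f : ((Fin n1 → ℝ) × (Fin n2 → ℝ)) → ((Fin n1 → ℝ) × (Fin n2 → ℝ)))
    (x : (Fin n1 → ℝ) × (Fin n2 → ℝ)) :
    jacP f x = LinearMap.toMatrix stdBasisProd stdBasisProd (fderiv ℝ f x) := by
  ext i j
  simp [jacP, LinearMap.toMatrix_apply, stdBasisProd_apply, stdBasisProd_repr]

theorem jacP_mul_jacP_eq_one_of_eventuallyEq_id
    {φ ψ : ((Fin n1 → ℝ) × (Fin n2 → ℝ)) → ((Fin n1 → ℝ) × (Fin n2 → ℝ))}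
    {x : (Fin n1 → ℝ) × (Fin n2 → ℝ)} (hφ : DifferentiableAt ℝ φ (ψ x))
    (hψ : DifferentiableAt ℝ ψ x) (hφψ : φ ∘ ψ =ᶠ[𝓝 x] id) :
    jacP φ (ψ x) * jacP ψ x = 1 := by
  rw [jacP_eq_toMatrix_fderiv, jacP_eq_toMatrix_fderiv, ← LinearMap.toMatrix_comp,
    ← ContinuousLinearMap.toLinearMap_comp, ← fderiv_comp x hφ hψ, hφψ.fderiv_eq, fderiv_id,
    ContinuousLinearMap.coe_id, LinearMap.toMatrix_id]

end Jacobian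

theorem semiExplicit_implies_constant_rank_general {n1 n2 : ℕ}
    (X : Set ((Fin n1 → ℝ) × (Fin n2 → ℝ))) (hX : IsOpen X)
    (E : ((Fin n1 → ℝ) × (Fin n2 → ℝ)) → Matrix (Fin n1 ⊕ Fin n2) (Fin n1 ⊕ Fin n2) ℝ)
    (Xt1 : Set (Fin n1 → ℝ)) (Xt2 : Set (Fin n2 → ℝ))
    (hXt1 : IsOpen Xt1) (hXt2 : IsOpen Xt2)
    (φ ψ : ((Fin n1 → ℝ) × (Fin n2 → ℝ)) → ((Fin n1 → ℝ) × (Fin n2 → ℝ)))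
    (hφ : ContDiffOn ℝ 1 φ (Xt1 ×ˢ Xt2))
    (hψ : ContDiffOn ℝ 1 ψ X) (hψmap : Set.MapsTo ψ X (Xt1 ×ˢ Xt2))
    (hφψ : ∀ x ∈ X, φ (ψ x) = x)
    (U : ((Fin n1 → ℝ) × (Fin n2 → ℝ)) → Matrix (Fin n1 ⊕ Fin n2) (Fin n1 ⊕ Fin n2) ℝ)
    (hUinv : ∀ xt ∈ Xt1 ×ˢ Xt2, IsUnit (U xt).det)
    -- the transformed gradient pair is semi-explicit
    (E11t : ((Fin n1 → ℝ) × (Fin n2 → ℝ)) → Matrix (Fin n1) (Fin n1) ℝ)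
    (hE11tinv : ∀ xt ∈ Xt1 ×ˢ Xt2, IsUnit (E11t xt).det)
    (hsemi : ∀ xt ∈ Xt1 ×ˢ Xt2,
      (U xt)ᵀ * E (φ xt) * jacP φ xt
        = (Matrix.fromBlocks (E11t xt) 0 0 0 :
            Matrix (Fin n1 ⊕ Fin n2) (Fin n1 ⊕ Fin n2) ℝ)) :
    ∀ x ∈ X, (E x).rank = n1 := by
  intro x hx
  have hxt : ψ x ∈ Xt1 ×ˢ Xt2 := hψmap hx
  have hJ : IsUnit (jacP φ (ψ x)).det := by
    refine isUnit_det_of_right_inverse (jacP_mul_jacP_eq_one_of_eventuallyEq_id ?_ ?_ ?_)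
    · exact (hφ.differentiableOn one_ne_zero).differentiableAt ((hXt1.prod hXt2).mem_nhds hxt)
    · exact (hψ.differentiableOn one_ne_zero).differentiableAt (hX.mem_nhds hx)
    · filter_upwards [hX.mem_nhds hx] with y hy using hφψ y hy
  have hUt : IsUnit (U (ψ x))ᵀ.det := by
    rw [det_transpose]
    exact hUinv _ hxt
  calc (E x).rank = ((U (ψ x))ᵀ * E (φ (ψ x)) * jacP φ (ψ x)).rank := by
        rw [rank_mul_eq_left_of_isUnit_det _ _ hJ, rank_mul_eq_right_of_isUnit_det _ _ hUt,
          hφψ x hx]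
    _ = n1 := by
        rw [hsemi _ hxt, rank_fromBlocks_zero₁₂_zero₂₁_zero₂₂ _ (hE11tinv _ hxt),
          Fintype.card_fin]

/-- if a gradient pair can be transformed to semi-explicit form by an
invertible system transformation, then its descriptor matrix has constant rank `n₁`. -/
theorem semiExplicit_implies_constant_rank {n1 n2 : ℕ}
    (X : Set ((Fin n1 → ℝ) × (Fin n2 → ℝ))) (hX : IsOpen X)
    (H : ((Fin n1 → ℝ) × (Fin n2 → ℝ)) → ℝ) (hH : ContDiffOn ℝ 1 H X)
    (E : ((Fin n1 → ℝ) × (Fin n2 → ℝ)) → Matrix (Fin n1 ⊕ Fin n2) (Fin n1 ⊕ Fin n2) ℝ)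
    (z : ((Fin n1 → ℝ) × (Fin n2 → ℝ)) → (Fin n1 ⊕ Fin n2 → ℝ))
    (hEcont : ContinuousOn E X) (hzcont : ContinuousOn z X)
    (hgradpair : ∀ x ∈ X, (E x)ᵀ.mulVec (z x) = gradP H x)
    (Xt1 : Set (Fin n1 → ℝ)) (Xt2 : Set (Fin n2 → ℝ))
    (hXt1 : IsOpen Xt1) (hXt2 : IsOpen Xt2) (hXt2conv : Convex ℝ Xt2)
    (φ ψ : ((Fin n1 → ℝ) × (Fin n2 → ℝ)) → ((Fin n1 → ℝ) × (Fin n2 → ℝ)))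
    (hφ : ContDiffOn ℝ 1 φ (Xt1 ×ˢ Xt2)) (hφmap : Set.MapsTo φ (Xt1 ×ˢ Xt2) X)
    (hψ : ContDiffOn ℝ 1 ψ X) (hψmap : Set.MapsTo ψ X (Xt1 ×ˢ Xt2))
    (hψφ : ∀ xt ∈ Xt1 ×ˢ Xt2, ψ (φ xt) = xt) (hφψ : ∀ x ∈ X, φ (ψ x) = x)
    (U : ((Fin n1 → ℝ) × (Fin n2 → ℝ)) → Matrix (Fin n1 ⊕ Fin n2) (Fin n1 ⊕ Fin n2) ℝ)
    (hUcont : ContinuousOn U (Xt1 ×ˢ Xt2))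
    (hUinv : ∀ xt ∈ Xt1 ×ˢ Xt2, IsUnit (U xt).det)
    -- the transformed gradient pair is semi-explicit
    (E11t : ((Fin n1 → ℝ) × (Fin n2 → ℝ)) → Matrix (Fin n1) (Fin n1) ℝ)
    (hE11tcont : ContinuousOn E11t (Xt1 ×ˢ Xt2))
    (hE11tinv : ∀ xt ∈ Xt1 ×ˢ Xt2, IsUnit (E11t xt).det)
    (hsemi : ∀ xt ∈ Xt1 ×ˢ Xt2,
      (U xt)ᵀ * E (φ xt) * jacP φ xt
        = (Matrix.fromBlocks (E11t xt) 0 0 0 :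
            Matrix (Fin n1 ⊕ Fin n2) (Fin n1 ⊕ Fin n2) ℝ)) :
    ∀ x ∈ X, (E x).rank = n1 :=
  semiExplicit_implies_constant_rank_general X hX E Xt1 Xt2 hXt1 hXt2 φ ψ hφ hψ hψmap hφψ U hUinv
    E11t hE11tinv hsemi
end

section
/- Let (E,z) be a gradient pair for H ∈ C¹(X,ℝ) on an open set X ⊆ ℝⁿ with constant matrix E ∈ ℝ^{n×n} of rank r, let E = U Σ Vᵀ be a singular value decomposition with U = [U₁, U₂], V = [V₁, V₂], Σ = diag(Σ₁, 0), where U₁, V₁ ∈ ℝ^{n×r} and Σ₁ ∈ ℝ^{r×r} is invertible. Assume that X̃ = VᵀX := {Vᵀx : x ∈ X} has the form X̃₁ × X̃₂ ⊆ ℝ^{r} × ℝ^{n−r} with X̃₂ open and convex. Then: (i) the function H̃ = H∘φ with φ(x̃) = Vx̃ admits a specified function H̃₁ ∈ C¹(X̃₁,ℝ) satisfying H̃₁(x̃₁) = H(V₁x̃₁ + V₂x̃₂) for all (x̃₁,x̃₂) ∈ X̃, in particular H̃₁(V₁ᵀx) = H(x) for all x ∈ X; and (ii) if D̄H̃₁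 is a discrete gradient for H̃₁ and ẑ₂ : X × X → ℝ^{n−r} is continuous with ẑ₂(x,x) = U₂ᵀ z(x) for all x ∈ X, then the pair (Ē, z̄) with Ē(x,x') = E and z̄(x,x') = U₁ Σ₁^{-ᵀ} D̄H̃₁(V₁ᵀx, V₁ᵀx') + U₂ ẑ₂(x,x') is a discrete gradient pair for (H,E,z). -/
open Matrix Set

noncomputable def gradI {ι : Type} [Fintype ι] [DecidableEq ι]
    (f : (ι → ℝ) → ℝ) (x : ι → ℝ) : ι → ℝ :=
  fun i => fderiv ℝ f x (Pi.single i 1)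

def IsDiscreteGradientI {ι : Type} [Fintype ι] [DecidableEq ι]
    (X : Set (ι → ℝ)) (f : (ι → ℝ) → ℝ)
    (Df : (ι → ℝ) → (ι → ℝ) → (ι → ℝ)) : Prop :=
  ContinuousOn (fun p : (ι → ℝ) × (ι → ℝ) => Df p.1 p.2) (X ×ˢ X) ∧
  (∀ x ∈ X, ∀ x' ∈ X, Df x x' ⬝ᵥ (x' - x) = f x' - f x) ∧
  (∀ x ∈ X, Df x x = gradI f x)

def IsDiscreteGradientPairI {ι : Type} [Fintype ι] [DecidableEq ι]
    (X : Set (ι → ℝ)) (H : (ι → ℝ) → ℝ)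
    (E : (ι → ℝ) → Matrix ι ι ℝ) (z : (ι → ℝ) → (ι → ℝ))
    (Ebar : (ι → ℝ) → (ι → ℝ) → Matrix ι ι ℝ)
    (zbar : (ι → ℝ) → (ι → ℝ) → (ι → ℝ)) : Prop :=
  ContinuousOn (fun p : (ι → ℝ) × (ι → ℝ) => Ebar p.1 p.2) (X ×ˢ X) ∧
  ContinuousOn (fun p : (ι → ℝ) × (ι → ℝ) => zbar p.1 p.2) (X ×ˢ X) ∧
  (∀ x ∈ X, ∀ x' ∈ X, zbar x x' ⬝ᵥ (Ebar x x').mulVec (x' - x) = H x' - H x) ∧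
  (∀ x ∈ X, Ebar x x = E x) ∧
  (∀ x ∈ X, zbar x x = z x)

/-!
With `x̃ = Vᵀ x`, the gradient-pair identity gives
`∂H(x) v = z(x)ᵀ U Σ Vᵀ v = (Σ₁ᵀ U₁ᵀ z(x)) ⬝ V₁ᵀ v`, so `H ∘ V` has zero derivative in the
`x̃₂`-directions and, the fibres `{x̃₁} × X̃₂` being convex, does not depend on `x̃₂`. This defines
`H̃₁`, with `∇H̃₁(V₁ᵀ x) = Σ₁ᵀ U₁ᵀ z(x)`. Since `Uᵀ z̄ = (Σ₁⁻ᵀ D̄H̃₁, ẑ₂)`, the same identity gives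
`z̄ᵀ E (x' - x) = D̄H̃₁ᵀ V₁ᵀ (x' - x) = H̃₁(V₁ᵀ x') - H̃₁(V₁ᵀ x)`, and on the diagonal
`z̄ = U Uᵀ z = z`.
-/

section Gradient

variable {ι : Type} [Fintype ι] [DecidableEq ι]

theorem gradI_dotProduct (f : (ι → ℝ) → ℝ) (x v : ι → ℝ) :
    gradI f x ⬝ᵥ v = fderiv ℝ f x v := by
  conv_rhs => rw [pi_eq_sum_univ' v]
  simp [gradI, dotProduct, mul_comm]

theorem gradI_eq_of_fderiv_apply_eq {f : (ι → ℝ) → ℝ} {x g : ι → ℝ}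
    (h : ∀ v, fderiv ℝ f x v = g ⬝ᵥ v) : gradI f x = g := by
  funext i
  rw [gradI, h, dotProduct_single_one]

end Gradient

theorem dotProduct_fromBlocks_zero_mulVec {R α α' β β' : Type*} [CommSemiring R] [Fintype α]
    [Fintype α'] [Fintype β] [Fintype β'] (S : Matrix α α' R) (v : α ⊕ β → R)
    (w : α' ⊕ β' → R) :
    v ⬝ᵥ (fromBlocks S 0 0 (0 : Matrix β β' R) *ᵥ w) = v ∘ Sum.inl ⬝ᵥ S *ᵥ (w ∘ Sum.inl) := by
  conv_lhs => rw [← Sum.elim_comp_inl_inr v, fromBlocks_mulVec]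
  simp only [zero_mulVec, add_zero, sumElim_dotProduct_sumElim, dotProduct_zero]

theorem dotProduct_mulVec_eq_of_eq_fromBlocks {R κ ι α α' β β' : Type*} [CommSemiring R]
    [Fintype κ] [Fintype ι] [Fintype α] [Fintype α'] [Fintype β] [Fintype β']
    {E : Matrix κ ι R} {U : Matrix κ (α ⊕ β) R} {S : Matrix α α' R}
    {V : Matrix ι (α' ⊕ β') R} (hE : E = U * fromBlocks S 0 0 (0 : Matrix β β' R) * Vᵀ)
    (y : κ → R) (v : ι → R) :
    y ⬝ᵥ E *ᵥ v = Sᵀ *ᵥ ((Uᵀ *ᵥ y) ∘ Sum.inl) ⬝ᵥ (Vᵀ *ᵥ v) ∘ Sum.inl := by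
  rw [hE, ← mulVec_mulVec, ← mulVec_mulVec, dotProduct_mulVec, ← mulVec_transpose,
    dotProduct_fromBlocks_zero_mulVec, dotProduct_mulVec, ← mulVec_transpose]

theorem fderiv_apply_eq_of_eq_fromBlocks {κ ι α α' β β' : Type} [Fintype κ] [Fintype ι]
    [DecidableEq ι] [Fintype α] [Fintype α'] [Fintype β] [Fintype β']
    {E : Matrix κ ι ℝ} {U : Matrix κ (α ⊕ β) ℝ} {S : Matrix α α' ℝ}
    {V : Matrix ι (α' ⊕ β') ℝ} (hE : E = U * fromBlocks S 0 0 (0 : Matrix β β' ℝ) * Vᵀ)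
    {H : (ι → ℝ) → ℝ} {x : ι → ℝ} {z : κ → ℝ} (hgrad : Eᵀ *ᵥ z = gradI H x) (v : ι → ℝ) :
    fderiv ℝ H x v = Sᵀ *ᵥ ((Uᵀ *ᵥ z) ∘ Sum.inl) ⬝ᵥ (Vᵀ *ᵥ v) ∘ Sum.inl := by
  rw [← gradI_dotProduct, ← hgrad, mulVec_transpose, ← dotProduct_mulVec,
    dotProduct_mulVec_eq_of_eq_fromBlocks hE]

theorem mem_image_transpose_mulVec_iff {R ι : Type*} [CommRing R] [Fintype ι] [DecidableEq ι]
    {V : Matrix ι ι R} (hV : Vᵀ * V = 1) {X : Set (ι → R)} {y : ι → R} :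
    y ∈ (Vᵀ *ᵥ ·) '' X ↔ V *ᵥ y ∈ X := by
  have hVVt : V * Vᵀ = 1 := mul_eq_one_comm.mp hV
  constructor
  · rintro ⟨x, hx, rfl⟩
    rwa [mulVec_mulVec, hVVt, one_mulVec]
  · exact fun hy => ⟨V *ᵥ y, hy, by simp only [mulVec_mulVec, hV, one_mulVec]⟩

section SumCoordinates

variable {α β : Type*} [Fintype α] [Fintype β]
  {G : Type*} [NormedAddCommGroup G] [NormedSpace ℝ G]

theorem fderiv_comp_sumElim_left_apply {f : (α ⊕ β → ℝ) → G} {a : α → ℝ} {b : β → ℝ}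
    (hf : DifferentiableAt ℝ f (Sum.elim a b)) (v : α → ℝ) :
    fderiv ℝ (fun t => f (Sum.elim t b)) a v = fderiv ℝ f (Sum.elim a b) (Sum.elim v 0) :=
  congrArg (· v) ((hf.hasFDerivAt.comp a
    ((ContinuousLinearEquiv.sumPiEquivProdPi ℝ α β fun _ => ℝ).symm.hasFDerivAt.comp a
      (hasFDerivAt_prodMk_left a b))).fderiv)

theorem contDiff_sumElim_left (b : β → ℝ) {n : WithTop ℕ∞} :
    ContDiff ℝ n (fun t : α → ℝ => (Sum.elim t b : α ⊕ β → ℝ)) :=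
  (ContinuousLinearEquiv.sumPiEquivProdPi ℝ α β fun _ => ℝ).symm.contDiff.comp
    (contDiff_id.prodMk contDiff_const)

theorem Convex.apply_sumElim_eq_of_fderiv_sumElim_zero {f : (α ⊕ β → ℝ) → G} {a : α → ℝ}
    {B : Set (β → ℝ)} (hB : Convex ℝ B) (hf : ∀ b ∈ B, DifferentiableAt ℝ f (Sum.elim a b))
    (hf0 : ∀ b ∈ B, ∀ w, fderiv ℝ f (Sum.elim a b) (Sum.elim 0 w) = 0) {b b' : β → ℝ}
    (hb : b ∈ B) (hb' : b' ∈ B) : f (Sum.elim a b) = f (Sum.elim a b') := by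
  have hderiv : ∀ c ∈ B,
      HasFDerivWithinAt (fun t => f (Sum.elim a t)) (0 : (β → ℝ) →L[ℝ] G) B c := by
    intro c hc
    have h := (hf c hc).hasFDerivAt.comp c
      ((ContinuousLinearEquiv.sumPiEquivProdPi ℝ α β fun _ => ℝ).symm.hasFDerivAt.comp c
        (hasFDerivAt_prodMk_right a c))
    exact (h.congr_fderiv (g' := 0)
      (ContinuousLinearMap.ext fun w => hf0 c hc w)).hasFDerivWithinAt
  have := hB.norm_image_sub_le_of_norm_hasFDerivWithin_le hderiv (C := 0) (by simp) hb hb'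
  rw [zero_mul, norm_le_zero_iff, sub_eq_zero] at this
  exact this.symm

end SumCoordinates

section MulVec

variable {m n : Type*} [Fintype m] [Fintype n] {G : Type*} [NormedAddCommGroup G]
  [NormedSpace ℝ G] (V : Matrix m n ℝ)

theorem contDiff_mulVec {k : WithTop ℕ∞} : ContDiff ℝ k (V *ᵥ ·) :=
  (mulVecLin V).toContinuousLinearMap.contDiff

theorem fderiv_comp_mulVec_apply {f : (m → ℝ) → G} {y : n → ℝ}
    (hf : DifferentiableAt ℝ f (V *ᵥ y)) (w : n → ℝ) :
    fderiv ℝ (fun y => f (V *ᵥ y)) y w = fderiv ℝ f (V *ᵥ y) (V *ᵥ w) :=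
  congrArg (· w) (hf.hasFDerivAt.comp y (mulVecLin V).toContinuousLinearMap.hasFDerivAt).fderiv

end MulVec

section SpecifiedFunction

variable {α β : Type} [Fintype α] [Fintype β]
  {X : Set (α ⊕ β → ℝ)} {H : (α ⊕ β → ℝ) → ℝ} {V : Matrix (α ⊕ β) (α ⊕ β) ℝ}
  {Xt1 : Set (α → ℝ)} {Xt2 : Set (β → ℝ)} {g : (α ⊕ β → ℝ) → α → ℝ}

theorem transpose_mulVec_mem_of_mem
    (hXt : (Vᵀ *ᵥ ·) '' X = {y | y ∘ Sum.inl ∈ Xt1 ∧ y ∘ Sum.inr ∈ Xt2})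
    {x : α ⊕ β → ℝ} (hx : x ∈ X) : (Vᵀ *ᵥ x) ∘ Sum.inl ∈ Xt1 ∧ (Vᵀ *ᵥ x) ∘ Sum.inr ∈ Xt2 := by
  have h := mem_image_of_mem (Vᵀ *ᵥ ·) hx
  rwa [hXt] at h

variable [DecidableEq α] [DecidableEq β]

theorem mulVec_sumElim_mem_iff (hV : Vᵀ * V = 1)
    (hXt : (Vᵀ *ᵥ ·) '' X = {y | y ∘ Sum.inl ∈ Xt1 ∧ y ∘ Sum.inr ∈ Xt2})
    {t : α → ℝ} {b : β → ℝ} : V *ᵥ Sum.elim t b ∈ X ↔ t ∈ Xt1 ∧ b ∈ Xt2 := by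
  rw [← mem_image_transpose_mulVec_iff hV, hXt]
  rfl

theorem mulVec_sumElim_transpose_mulVec (hV : Vᵀ * V = 1) (x : α ⊕ β → ℝ) :
    V *ᵥ Sum.elim ((Vᵀ *ᵥ x) ∘ Sum.inl) ((Vᵀ *ᵥ x) ∘ Sum.inr) = x := by
  rw [Sum.elim_comp_inl_inr, mulVec_mulVec, mul_eq_one_comm.mp hV, one_mulVec]

theorem transpose_mulVec_mulVec_sumElim_comp_inl (hV : Vᵀ * V = 1) (t : α → ℝ) (b : β → ℝ) :
    (Vᵀ *ᵥ V *ᵥ Sum.elim t b) ∘ Sum.inl = t := by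
  rw [mulVec_mulVec, hV, one_mulVec, Sum.elim_comp_inl]

theorem apply_mulVec_sumElim_eq (hX : IsOpen X) (hH : DifferentiableOn ℝ H X)
    (hV : Vᵀ * V = 1) (hXt : (Vᵀ *ᵥ ·) '' X = {y | y ∘ Sum.inl ∈ Xt1 ∧ y ∘ Sum.inr ∈ Xt2})
    (hXt2 : Convex ℝ Xt2) (hDH : ∀ x ∈ X, ∀ v, fderiv ℝ H x v = g x ⬝ᵥ (Vᵀ *ᵥ v) ∘ Sum.inl)
    {t : α → ℝ} {b b' : β → ℝ} (ht : t ∈ Xt1) (hb : b ∈ Xt2) (hb' : b' ∈ Xt2) :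
    H (V *ᵥ Sum.elim t b) = H (V *ᵥ Sum.elim t b') := by
  have hmem : ∀ c ∈ Xt2, V *ᵥ Sum.elim t c ∈ X := fun c hc =>
    (mulVec_sumElim_mem_iff hV hXt).mpr ⟨ht, hc⟩
  have hdiff : ∀ c ∈ Xt2, DifferentiableAt ℝ H (V *ᵥ Sum.elim t c) := fun c hc =>
    hH.differentiableAt (hX.mem_nhds (hmem c hc))
  refine hXt2.apply_sumElim_eq_of_fderiv_sumElim_zero (f := fun y => H (V *ᵥ y))
    (fun c hc => (hdiff c hc).comp _
      (contDiff_mulVec V (k := 1)).differentiable_one.differentiableAt)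
    (fun c hc w => ?_) hb hb'
  rw [fderiv_comp_mulVec_apply V (hdiff c hc), hDH _ (hmem c hc),
    transpose_mulVec_mulVec_sumElim_comp_inl hV, dotProduct_zero]

theorem isOpen_left_of_mem_right (hX : IsOpen X) (hV : Vᵀ * V = 1)
    (hXt : (Vᵀ *ᵥ ·) '' X = {y | y ∘ Sum.inl ∈ Xt1 ∧ y ∘ Sum.inr ∈ Xt2})
    {c : β → ℝ} (hc : c ∈ Xt2) : IsOpen Xt1 := by
  have hXt1 : Xt1 = (fun t => V *ᵥ Sum.elim t c) ⁻¹' X := by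
    ext t
    simp only [mem_preimage, mulVec_sumElim_mem_iff hV hXt, hc, and_true]
  rw [hXt1]
  exact hX.preimage ((contDiff_mulVec V (k := 0)).continuous.comp
    (contDiff_sumElim_left c (n := 0)).continuous)

theorem gradI_comp_mulVec_sumElim (hX : IsOpen X) (hH : DifferentiableOn ℝ H X)
    (hV : Vᵀ * V = 1) (hXt : (Vᵀ *ᵥ ·) '' X = {y | y ∘ Sum.inl ∈ Xt1 ∧ y ∘ Sum.inr ∈ Xt2})
    (hXt2 : Convex ℝ Xt2) (hDH : ∀ x ∈ X, ∀ v, fderiv ℝ H x v = g x ⬝ᵥ (Vᵀ *ᵥ v) ∘ Sum.inl)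
    {c : β → ℝ} (hc : c ∈ Xt2) {x : α ⊕ β → ℝ} (hx : x ∈ X) :
    gradI (fun t => H (V *ᵥ Sum.elim t c)) ((Vᵀ *ᵥ x) ∘ Sum.inl) = g x := by
  set a := (Vᵀ *ᵥ x) ∘ Sum.inl
  set b := (Vᵀ *ᵥ x) ∘ Sum.inr
  obtain ⟨ha, hb⟩ := transpose_mulVec_mem_of_mem hXt hx
  have hx' : V *ᵥ Sum.elim a b = x := mulVec_sumElim_transpose_mulVec hV x
  have hlocal : (fun t => H (V *ᵥ Sum.elim t c)) =ᶠ[nhds a] fun t => H (V *ᵥ Sum.elim t b) :=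
    Filter.eventuallyEq_of_mem ((isOpen_left_of_mem_right hX hV hXt hc).mem_nhds ha) fun t ht =>
      apply_mulVec_sumElim_eq hX hH hV hXt hXt2 hDH ht hc hb
  have hdiff : DifferentiableAt ℝ H (V *ᵥ Sum.elim a b) :=
    hH.differentiableAt (hX.mem_nhds (hx'.symm ▸ hx))
  refine gradI_eq_of_fderiv_apply_eq fun v => ?_
  rw [hlocal.fderiv_eq, fderiv_comp_sumElim_left_apply (f := fun y => H (V *ᵥ y))
    (hdiff.comp _ (contDiff_mulVec V (k := 1)).differentiable_one.differentiableAt),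
    fderiv_comp_mulVec_apply V hdiff, hx', hDH x hx, transpose_mulVec_mulVec_sumElim_comp_inl hV]

theorem exists_specified_function (hX : IsOpen X) (hH : ContDiffOn ℝ 1 H X)
    (hV : Vᵀ * V = 1) (hXt : (Vᵀ *ᵥ ·) '' X = {y | y ∘ Sum.inl ∈ Xt1 ∧ y ∘ Sum.inr ∈ Xt2})
    (hXt2 : Convex ℝ Xt2) (hDH : ∀ x ∈ X, ∀ v, fderiv ℝ H x v = g x ⬝ᵥ (Vᵀ *ᵥ v) ∘ Sum.inl) :
    ∃ Ht1 : (α → ℝ) → ℝ, ContDiffOn ℝ 1 Ht1 Xt1 ∧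
      (∀ t ∈ Xt1, ∀ b ∈ Xt2, Ht1 t = H (V *ᵥ Sum.elim t b)) ∧
      (∀ x ∈ X, Ht1 ((Vᵀ *ᵥ x) ∘ Sum.inl) = H x) ∧
      ∀ x ∈ X, gradI Ht1 ((Vᵀ *ᵥ x) ∘ Sum.inl) = g x := by
  rcases Xt2.eq_empty_or_nonempty with hempty | ⟨c, hc⟩
  · have hXempty : X = ∅ := eq_empty_of_forall_notMem fun x hx =>
      (hempty ▸ (transpose_mulVec_mem_of_mem hXt hx).2 : _ ∈ (∅ : Set (β → ℝ)))
    exact ⟨0, contDiffOn_const, by simp [hempty], by simp [hXempty], by simp [hXempty]⟩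
  have hdiff := hH.differentiableOn one_ne_zero
  refine ⟨fun t => H (V *ᵥ Sum.elim t c), ?_, fun t ht b hb =>
    apply_mulVec_sumElim_eq hX hdiff hV hXt hXt2 hDH ht hc hb, fun x hx => ?_,
    fun x hx => gradI_comp_mulVec_sumElim hX hdiff hV hXt hXt2 hDH hc hx⟩
  · exact hH.comp ((contDiff_mulVec V).comp (contDiff_sumElim_left c)).contDiffOn
      fun t ht => (mulVec_sumElim_mem_iff hV hXt).mpr ⟨ht, hc⟩
  · obtain ⟨ha, hb⟩ := transpose_mulVec_mem_of_mem hXt hx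
    dsimp only
    rw [apply_mulVec_sumElim_eq hX hdiff hV hXt hXt2 hDH ha hc hb,
      mulVec_sumElim_transpose_mulVec hV]

end SpecifiedFunction

theorem isDiscreteGradientPairI_of_eq_fromBlocks {α β : Type} [Fintype α] [Fintype β]
    [DecidableEq α] [DecidableEq β] {X : Set (α ⊕ β → ℝ)} {H : (α ⊕ β → ℝ) → ℝ}
    {E U V : Matrix (α ⊕ β) (α ⊕ β) ℝ} {S : Matrix α α ℝ} {z : (α ⊕ β → ℝ) → α ⊕ β → ℝ}
    {Xt1 : Set (α → ℝ)} {Ht1 : (α → ℝ) → ℝ} {DHt1 : (α → ℝ) → (α → ℝ) → α → ℝ}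
    {zh2 : (α ⊕ β → ℝ) → (α ⊕ β → ℝ) → β → ℝ}
    (hU : Uᵀ * U = 1) (hS : IsUnit S.det)
    (hE : E = U * fromBlocks S 0 0 (0 : Matrix β β ℝ) * Vᵀ)
    (hmem : ∀ x ∈ X, (Vᵀ *ᵥ x) ∘ Sum.inl ∈ Xt1)
    (hHt1 : ∀ x ∈ X, Ht1 ((Vᵀ *ᵥ x) ∘ Sum.inl) = H x)
    (hgrad1 : ∀ x ∈ X, gradI Ht1 ((Vᵀ *ᵥ x) ∘ Sum.inl) = Sᵀ *ᵥ ((Uᵀ *ᵥ z x) ∘ Sum.inl))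
    (hD : IsDiscreteGradientI Xt1 Ht1 DHt1)
    (hzh2 : ContinuousOn (fun p : (α ⊕ β → ℝ) × (α ⊕ β → ℝ) => zh2 p.1 p.2) (X ×ˢ X))
    (hzh2diag : ∀ x ∈ X, zh2 x x = (Uᵀ *ᵥ z x) ∘ Sum.inr) :
    IsDiscreteGradientPairI X H (fun _ => E) z (fun _ _ => E) fun x x' =>
      U.toCols₁ *ᵥ ((Sᵀ)⁻¹ *ᵥ DHt1 ((Vᵀ *ᵥ x) ∘ Sum.inl) ((Vᵀ *ᵥ x') ∘ Sum.inl)) +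
        U.toCols₂ *ᵥ zh2 x x' := by
  obtain ⟨hDcont, hDdiff, hDdiag⟩ := hD
  have hzbar : ∀ p q, U.toCols₁ *ᵥ p + U.toCols₂ *ᵥ q = U *ᵥ Sum.elim p q := fun p q => by
    rw [← fromCols_mulVec_sumElim, fromCols_toCols]
  have hS' : IsUnit Sᵀ.det := by rwa [det_transpose]
  refine ⟨continuousOn_const, ?_, fun x hx x' hx' => ?_, fun _ _ => rfl, fun x hx => ?_⟩
  · have hπ : Continuous fun x : α ⊕ β → ℝ => (Vᵀ *ᵥ x) ∘ Sum.inl := by fun_prop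
    refine .add ((contDiff_mulVec _ (k := 0)).continuous.comp_continuousOn
      ((contDiff_mulVec _ (k := 0)).continuous.comp_continuousOn (hDcont.comp
        ((hπ.comp continuous_fst).prodMk (hπ.comp continuous_snd)).continuousOn
        fun p hp => ⟨hmem _ hp.1, hmem _ hp.2⟩)))
      ((contDiff_mulVec _ (k := 0)).continuous.comp_continuousOn hzh2)
  · dsimp only
    rw [hzbar, dotProduct_mulVec_eq_of_eq_fromBlocks hE, mulVec_mulVec, hU, one_mulVec,
      Sum.elim_comp_inl, mulVec_mulVec, mul_nonsing_inv _ hS', one_mulVec, mulVec_sub,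
      Pi.sub_comp, hDdiff _ (hmem x hx) _ (hmem x' hx'), hHt1 x hx, hHt1 x' hx']
  · dsimp only
    rw [hDdiag _ (hmem x hx), hgrad1 x hx, mulVec_mulVec (M := (Sᵀ)⁻¹), nonsing_inv_mul _ hS',
      one_mulVec, hzh2diag x hx, hzbar, Sum.elim_comp_inl_inr, mulVec_mulVec, mul_eq_one_comm.mp hU,
      one_mulVec]

/-- `n` is split as `r + s`; `U₁`, `V₁` are the first `r` columns of `U`, `V`, and
`Σ = fromBlocks S1 0 0 0`. -/
theorem discrete_gradient_pair_constant_E_general {r s : ℕ}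
    (X : Set ((Fin r ⊕ Fin s) → ℝ)) (hX : IsOpen X)
    (H : ((Fin r ⊕ Fin s) → ℝ) → ℝ) (hH : ContDiffOn ℝ 1 H X)
    (E U V : Matrix (Fin r ⊕ Fin s) (Fin r ⊕ Fin s) ℝ)
    (S1 : Matrix (Fin r) (Fin r) ℝ)
    (hU : Uᵀ * U = 1) (hV : Vᵀ * V = 1) (hS1 : IsUnit S1.det)
    (hSVD : E = U * (Matrix.fromBlocks S1 0 0 0 :
      Matrix (Fin r ⊕ Fin s) (Fin r ⊕ Fin s) ℝ) * Vᵀ)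
    (z : ((Fin r ⊕ Fin s) → ℝ) → ((Fin r ⊕ Fin s) → ℝ))
    (hgradpair : ∀ x ∈ X, Eᵀ.mulVec (z x) = gradI H x)
    -- the transformed state space VᵀX has product form X̃₁ × X̃₂ with X̃₂ open convex
    (Xt1 : Set (Fin r → ℝ)) (Xt2 : Set (Fin s → ℝ))
    (hXt2conv : Convex ℝ Xt2)
    (hXt : (fun x => Vᵀ.mulVec x) '' X
      = {xt : (Fin r ⊕ Fin s) → ℝ |
          (fun i => xt (Sum.inl i)) ∈ Xt1 ∧ (fun j => xt (Sum.inr j)) ∈ Xt2}) :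
    ∃ Ht1 : (Fin r → ℝ) → ℝ,
      -- (i) H̃ = H ∘ (V ·) admits the specified function H̃₁
      ContDiffOn ℝ 1 Ht1 Xt1 ∧
      (∀ xt1 ∈ Xt1, ∀ xt2 ∈ Xt2, Ht1 xt1 = H (V.mulVec (Sum.elim xt1 xt2))) ∧
      (∀ x ∈ X, Ht1 (fun i => Vᵀ.mulVec x (Sum.inl i)) = H x) ∧
      -- (ii) the induced discrete gradient pair for (H, E, z)
      (∀ DHt1 : (Fin r → ℝ) → (Fin r → ℝ) → (Fin r → ℝ),
        IsDiscreteGradientI Xt1 Ht1 DHt1 →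
        ∀ zh2 : ((Fin r ⊕ Fin s) → ℝ) → ((Fin r ⊕ Fin s) → ℝ) → (Fin s → ℝ),
          ContinuousOn (fun p : ((Fin r ⊕ Fin s) → ℝ) × ((Fin r ⊕ Fin s) → ℝ) =>
            zh2 p.1 p.2) (X ×ˢ X) →
          (∀ x ∈ X, zh2 x x = fun j => Uᵀ.mulVec (z x) (Sum.inr j)) →
          IsDiscreteGradientPairI X H (fun _ => E) z (fun _ _ => E)
            (fun x x' =>
              (Matrix.of fun i (a : Fin r) => U i (Sum.inl a)).mulVec
                ((S1ᵀ)⁻¹.mulVec (DHt1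
                  (fun a => Vᵀ.mulVec x (Sum.inl a))
                  (fun a => Vᵀ.mulVec x' (Sum.inl a))))
              + (Matrix.of fun i (b : Fin s) => U i (Sum.inr b)).mulVec (zh2 x x'))) := by
  have hDH : ∀ x ∈ X, ∀ v, fderiv ℝ H x v =
      S1ᵀ *ᵥ ((Uᵀ *ᵥ z x) ∘ Sum.inl) ⬝ᵥ (Vᵀ *ᵥ v) ∘ Sum.inl :=
    fun x hx => fderiv_apply_eq_of_eq_fromBlocks hSVD (hgradpair x hx)
  obtain ⟨Ht1, hHt1, hfibre, hrestrict, hgrad1⟩ :=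
    exists_specified_function hX hH hV hXt hXt2conv hDH
  exact ⟨Ht1, hHt1, hfibre, hrestrict, fun DHt1 hD zh2 hzh2 hzh2diag =>
    isDiscreteGradientPairI_of_eq_fromBlocks hU hS1 hSVD
      (fun x hx => (transpose_mulVec_mem_of_mem hXt hx).1) hrestrict hgrad1 hD hzh2 hzh2diag⟩

/-- construction of a discrete gradient pair for a gradient pair with
constant descriptor matrix `E` via a singular value decomposition `E = U Σ Vᵀ`.
Here `n` is split as `r + s` with `s = n − r`, `U₁, V₁` are the first `r` columns of
`U, V`, and `Σ = diag(Σ₁, 0)`. -/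
theorem discrete_gradient_pair_constant_E {r s : ℕ}
    (X : Set ((Fin r ⊕ Fin s) → ℝ)) (hX : IsOpen X)
    (H : ((Fin r ⊕ Fin s) → ℝ) → ℝ) (hH : ContDiffOn ℝ 1 H X)
    (E U V : Matrix (Fin r ⊕ Fin s) (Fin r ⊕ Fin s) ℝ)
    (S1 : Matrix (Fin r) (Fin r) ℝ)
    (hU : Uᵀ * U = 1) (hV : Vᵀ * V = 1) (hS1 : IsUnit S1.det)
    (hSVD : E = U * (Matrix.fromBlocks S1 0 0 0 :
      Matrix (Fin r ⊕ Fin s) (Fin r ⊕ Fin s) ℝ) * Vᵀ)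
    (z : ((Fin r ⊕ Fin s) → ℝ) → ((Fin r ⊕ Fin s) → ℝ))
    (hzcont : ContinuousOn z X)
    (hgradpair : ∀ x ∈ X, Eᵀ.mulVec (z x) = gradI H x)
    -- the transformed state space VᵀX has product form X̃₁ × X̃₂ with X̃₂ open convex
    (Xt1 : Set (Fin r → ℝ)) (Xt2 : Set (Fin s → ℝ))
    (hXt2open : IsOpen Xt2) (hXt2conv : Convex ℝ Xt2)
    (hXt : (fun x => Vᵀ.mulVec x) '' X
      = {xt : (Fin r ⊕ Fin s) → ℝ |
          (fun i => xt (Sum.inl i)) ∈ Xt1 ∧ (fun j => xt (Sum.inr j)) ∈ Xt2}) :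
    ∃ Ht1 : (Fin r → ℝ) → ℝ,
      -- (i) H̃ = H ∘ (V ·) admits the specified function H̃₁
      ContDiffOn ℝ 1 Ht1 Xt1 ∧
      (∀ xt1 ∈ Xt1, ∀ xt2 ∈ Xt2, Ht1 xt1 = H (V.mulVec (Sum.elim xt1 xt2))) ∧
      (∀ x ∈ X, Ht1 (fun i => Vᵀ.mulVec x (Sum.inl i)) = H x) ∧
      -- (ii) the induced discrete gradient pair for (H, E, z)
      (∀ DHt1 : (Fin r → ℝ) → (Fin r → ℝ) → (Fin r → ℝ),
        IsDiscreteGradientI Xt1 Ht1 DHt1 →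
        ∀ zh2 : ((Fin r ⊕ Fin s) → ℝ) → ((Fin r ⊕ Fin s) → ℝ) → (Fin s → ℝ),
          ContinuousOn (fun p : ((Fin r ⊕ Fin s) → ℝ) × ((Fin r ⊕ Fin s) → ℝ) =>
            zh2 p.1 p.2) (X ×ˢ X) →
          (∀ x ∈ X, zh2 x x = fun j => Uᵀ.mulVec (z x) (Sum.inr j)) →
          IsDiscreteGradientPairI X H (fun _ => E) z (fun _ _ => E)
            (fun x x' =>
              (Matrix.of fun i (a : Fin r) => U i (Sum.inl a)).mulVec
                ((S1ᵀ)⁻¹.mulVec (DHt1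
                  (fun a => Vᵀ.mulVec x (Sum.inl a))
                  (fun a => Vᵀ.mulVec x' (Sum.inl a))))
              + (Matrix.of fun i (b : Fin s) => U i (Sum.inr b)).mulVec (zh2 x x'))) :=
  discrete_gradient_pair_constant_E_general X hX H hH E U V S1 hU hV hS1 hSVD z hgradpair Xt1 Xt2
    hXt2conv hXt
end
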